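/- arXiv:1810.02732 — 10 statements merged into one kernel-verified Lean document; each statement's English description precedes it below -/
import Mathlib

section
/- For every integer n ≥ 1, the sum of the Ramanujan–Shor polynomials over the second index satisfies ∑_{k=0}^{n−1} Q_{n,k}(x) = (x+n)^{n−1}, as an identity in the polynomial ring ℚ[x]. -/
open Polynomial

/-- The Ramanujan–Shor polynomials `Q n k ∈ ℚ[x]`. -/
noncomputable def ramanujanShorQ : ℕ → ℤ → Polynomial ℚ
  | 0, _ => 0
  | 1, k => if k = 0 then 1 else 0
  | (n + 2), k =>
      if 0 ≤ k ∧ k ≤ (n : ℤ) + 1 then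
        (Polynomial.X + Polynomial.C ((n : ℚ) + 1)) * ramanujanShorQ (n + 1) k
          + Polynomial.C (((n : ℤ) + k : ℤ) : ℚ) * ramanujanShorQ (n + 1) (k - 1)
      else 0

/-!
Write `S n = ∑ₖ Q n k`. The recurrence alone does not close up under summation, but it implies
the shifted recurrence
`Q (n+2) k (x) = (n+k) Q (n+1) (k-1) (x+1) + (x+1-k) Q (n+1) k (x+1)`,
whose two coefficients add up to `x+n+2` after reindexing the first sum. Hence
`S (n+2) (x) = (x+n+2) S (n+1) (x+1)`, and induction gives `S (n+1) (x) = (x+n+1)^n`.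
-/

theorem ramanujanShorQ_eq_zero_of_neg {n : ℕ} {k : ℤ} (hk : k < 0) :
    ramanujanShorQ n k = 0 := by
  match n with
  | 0 => rfl
  | 1 => simp [ramanujanShorQ, hk.ne]
  | n + 2 => rw [ramanujanShorQ, if_neg (by omega)]

theorem ramanujanShorQ_eq_zero_of_le {n : ℕ} {k : ℤ} (hk : (n : ℤ) ≤ k) :
    ramanujanShorQ n k = 0 := by
  match n with
  | 0 => rfl
  | 1 => simp [ramanujanShorQ, show k ≠ 0 by omega]
  | n + 2 => rw [ramanujanShorQ, if_neg (by push_cast at hk; omega)]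

theorem ramanujanShorQ_one (k : ℤ) : ramanujanShorQ 1 k = if k = 0 then 1 else 0 := by
  rw [ramanujanShorQ]

/-- The range guard in the definition is harmless: both sides vanish outside `0 ≤ k ≤ n + 1`. -/
theorem ramanujanShorQ_add_two (n : ℕ) (k : ℤ) :
    ramanujanShorQ (n + 2) k
      = (X + C ((n : ℚ) + 1)) * ramanujanShorQ (n + 1) k
          + C ((n : ℚ) + k) * ramanujanShorQ (n + 1) (k - 1) := by
  rw [ramanujanShorQ]
  split_ifs with hk
  · push_cast; rfl
  · rcases not_and_or.mp hk with hk | hk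
    · rw [ramanujanShorQ_eq_zero_of_neg (by omega), ramanujanShorQ_eq_zero_of_neg (by omega)]
      ring
    · rw [ramanujanShorQ_eq_zero_of_le (by push_cast; omega),
        ramanujanShorQ_eq_zero_of_le (by push_cast; omega)]
      ring

theorem ramanujanShorQ_add_two_eq_comp (n : ℕ) (k : ℤ) :
    ramanujanShorQ (n + 2) k
      = C ((n : ℚ) + k) * (ramanujanShorQ (n + 1) (k - 1)).comp (X + 1)
          + (X + 1 - C (k : ℚ)) * (ramanujanShorQ (n + 1) k).comp (X + 1) := by
  induction n generalizing k with
  | zero =>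
    rw [ramanujanShorQ_add_two, ramanujanShorQ_one, ramanujanShorQ_one]
    rcases eq_or_ne k 0 with rfl | hk0
    · simp
    rcases eq_or_ne k 1 with rfl | hk1
    · simp
    simp [hk0, hk1, sub_eq_zero]
  | succ n ih =>
    rw [ramanujanShorQ_add_two (n + 1)]
    conv_lhs => rw [ih k, ih (k - 1)]
    conv_rhs => rw [ramanujanShorQ_add_two n k, ramanujanShorQ_add_two n (k - 1)]
    simp only [add_comp, mul_comp, X_comp, one_comp, natCast_comp, intCast_comp, map_add,
      map_natCast, map_intCast, map_one]
    push_cast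
    ring

theorem sum_ramanujanShorQ_add_two (n : ℕ) :
    ∑ k ∈ Finset.range (n + 2), ramanujanShorQ (n + 2) k
      = (X + C ((n : ℚ) + 2))
          * (∑ k ∈ Finset.range (n + 1), ramanujanShorQ (n + 1) k).comp (X + 1) := by
  have h_neg : ramanujanShorQ (n + 1) (((0 : ℕ) : ℤ) - 1) = 0 :=
    ramanujanShorQ_eq_zero_of_neg (by norm_num)
  have h_top : ramanujanShorQ (n + 1) ((n + 1 : ℕ) : ℤ) = 0 :=
    ramanujanShorQ_eq_zero_of_le le_rfl
  simp_rw [ramanujanShorQ_add_two_eq_comp, Finset.sum_add_distrib]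
  rw [Finset.sum_range_succ' _ (n + 1), Finset.sum_range_succ _ (n + 1), h_neg, h_top]
  simp only [zero_comp, mul_zero, add_zero, ← Finset.sum_add_distrib, sum_comp, Finset.mul_sum]
  refine Finset.sum_congr rfl fun k _ => ?_
  rw [Nat.cast_succ, add_sub_cancel_right, ← add_mul]
  congr 1
  push_cast
  simp only [map_add, map_natCast, map_one, map_ofNat]
  ring

theorem sum_ramanujanShorQ_add_one (n : ℕ) :
    ∑ k ∈ Finset.range (n + 1), ramanujanShorQ (n + 1) k = (X + C ((n : ℚ) + 1)) ^ n := by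
  induction n with
  | zero => simp [ramanujanShorQ_one]
  | succ n ih =>
    rw [sum_ramanujanShorQ_add_two, ih, pow_comp, add_comp, X_comp, C_comp, pow_succ',
      Nat.cast_succ, add_assoc _ (1 : ℚ), one_add_one_eq_two]
    congr 2
    simp only [map_add, map_one, map_ofNat]
    ring

theorem ramanujanShorQ_sum (n : ℕ) (hn : 1 ≤ n) :
    ∑ k ∈ Finset.range n, ramanujanShorQ n (k : ℤ)
      = (Polynomial.X + Polynomial.C (n : ℚ)) ^ (n - 1) := by
  obtain ⟨m, rfl⟩ := Nat.exists_eq_add_of_le' hn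
  simpa using sum_ramanujanShorQ_add_one m
end

section
/- (Berndt–Evans–Wilson–Shor recursion) For all integers n ≥ 2 and 0 ≤ k ≤ n−1, Q_{n,k}(x) = (x−k+1)·Q_{n−1,k}(x+1) + (n+k−2)·Q_{n−1,k−1}(x+1), as an identity in ℚ[x], where P(x+1) denotes the composition of the polynomial P with x+1. -/
open Polynomial

lemma Qneg (n : ℕ) (k : ℤ) (hk : k < 0) : ramanujanShorQ n k = 0 := by
  match n with
  | 0 => rfl
  | 1 => simp [ramanujanShorQ]; omega
  | (n+2) => rw [ramanujanShorQ, if_neg]; omega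

lemma Qbig (n : ℕ) (k : ℤ) (hk : (n : ℤ) ≤ k) : ramanujanShorQ n k = 0 := by
  match n with
  | 0 => rfl
  | 1 => simp [ramanujanShorQ]; omega
  | (n+2) => rw [ramanujanShorQ, if_neg]; push_cast at hk ⊢; omega

lemma key (m : ℕ) : ∀ k : ℤ, 0 ≤ k → k ≤ (m:ℤ)+1 →
    ramanujanShorQ (m+2) k
      = (X - C (k:ℚ) + 1) * (ramanujanShorQ (m+1) k).comp (X+1)
        + C ((((m:ℤ)+k : ℤ)) : ℚ) * (ramanujanShorQ (m+1) (k-1)).comp (X+1) := by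
  induction m with
  | zero =>
    intro k hk0 hk1
    interval_cases k <;>
      simp [ramanujanShorQ]
  | succ m ih =>
    intro k hk0 hk1
    set A := (ramanujanShorQ (m+1) k).comp (X+1) with hA
    set B := (ramanujanShorQ (m+1) (k-1)).comp (X+1) with hB
    set C' := (ramanujanShorQ (m+1) (k-2)).comp (X+1) with hC
    have h1 : ramanujanShorQ (m+2) k
        = (X - C (k:ℚ) + 1) * A + C ((((m:ℤ)+k : ℤ)) : ℚ) * B := by
      rcases eq_or_lt_of_le hk1 with h | h
      · have e1 : ramanujanShorQ (m+2) k = 0 := Qbig _ _ (by omega)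
        have e2 : ramanujanShorQ (m+1) k = 0 := Qbig _ _ (by omega)
        have e3 : ramanujanShorQ (m+1) (k-1) = 0 := Qbig _ _ (by omega)
        simp [e1, e2, e3, hA, hB]
      · exact ih k hk0 (by omega)
    have h2 : ramanujanShorQ (m+2) (k-1)
        = (X - C ((k:ℚ)-1) + 1) * B + C ((((m:ℤ)+k-1 : ℤ)) : ℚ) * C' := by
      rcases eq_or_lt_of_le hk0 with h | h
      · have e1 : ramanujanShorQ (m+2) (k-1) = 0 := Qneg _ _ (by omega)
        have e2 : ramanujanShorQ (m+1) (k-1) = 0 := Qneg _ _ (by omega)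
        have e3 : ramanujanShorQ (m+1) (k-2) = 0 := Qneg _ _ (by omega)
        simp [e1, e2, e3, hB, hC]
      · have this := ih (k-1) (by omega) (by omega)
        rw [show k - 1 - 1 = k - 2 from by ring] at this
        rw [this, ← hB, ← hC]
        push_cast
        simp only [map_add, map_sub, map_one, map_ofNat]
        ring
    have h3 : (ramanujanShorQ (m+2) k).comp (X+1)
        = (X + C ((m:ℚ)+2)) * A + C ((((m:ℤ)+k : ℤ)) : ℚ) * B := by
      rcases eq_or_lt_of_le hk1 with h | h
      · have e1 : ramanujanShorQ (m+2) k = 0 := Qbig _ _ (by omega)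
        have e2 : ramanujanShorQ (m+1) k = 0 := Qbig _ _ (by omega)
        have e3 : ramanujanShorQ (m+1) (k-1) = 0 := Qbig _ _ (by omega)
        simp [e1, e2, e3, hA, hB]
      · rw [ramanujanShorQ, if_pos ⟨hk0, by push_cast at h ⊢; omega⟩]
        simp only [add_comp, mul_comp, X_comp, C_comp, ← hA, ← hB]
        push_cast
        simp only [map_add, map_sub, map_one, map_ofNat]
        ring
    have h4 : (ramanujanShorQ (m+2) (k-1)).comp (X+1)
        = (X + C ((m:ℚ)+2)) * B + C ((((m:ℤ)+k-1 : ℤ)) : ℚ) * C' := by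
      rcases eq_or_lt_of_le hk0 with h | h
      · have e1 : ramanujanShorQ (m+2) (k-1) = 0 := Qneg _ _ (by omega)
        have e2 : ramanujanShorQ (m+1) (k-1) = 0 := Qneg _ _ (by omega)
        have e3 : ramanujanShorQ (m+1) (k-2) = 0 := Qneg _ _ (by omega)
        simp [e1, e2, e3, hB, hC]
      · rw [ramanujanShorQ, if_pos ⟨by omega, by push_cast at hk1 ⊢; omega⟩]
        simp only [add_comp, mul_comp, X_comp, C_comp]
        rw [show k - 1 - 1 = k - 2 from by ring, ← hB, ← hC]
        push_cast
        simp only [map_add, map_sub, map_one, map_ofNat]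
        ring
    rw [show m + 1 + 2 = m + 3 from rfl, ramanujanShorQ,
      if_pos ⟨hk0, by push_cast at hk1 ⊢; omega⟩]
    rw [show m + 1 + 1 = m + 2 from rfl]
    rw [h3, h4, h1, h2]
    push_cast
    simp only [map_add, map_sub, map_one, map_ofNat]
    ring

theorem berndt_evans_wilson_shor (n : ℕ) (hn : 2 ≤ n) (k : ℤ) (hk0 : 0 ≤ k)
    (hk1 : k ≤ (n : ℤ) - 1) :
    ramanujanShorQ n k
      = (Polynomial.X - Polynomial.C (k : ℚ) + 1)
          * (ramanujanShorQ (n - 1) k).comp (Polynomial.X + 1)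
        + Polynomial.C (((n : ℤ) + k - 2 : ℤ) : ℚ)
          * (ramanujanShorQ (n - 1) (k - 1)).comp (Polynomial.X + 1) := by
  obtain ⟨m, rfl⟩ : ∃ m, n = m + 2 := ⟨n - 2, by omega⟩
  have := key m k hk0 (by push_cast at hk1 ⊢; omega)
  rw [show m + 2 - 1 = m + 1 from rfl]
  rw [show ((((m:ℕ)+2 :ℕ):ℤ) + k - 2 : ℤ) = (m:ℤ) + k from by push_cast; ring]
  exact this
end

section
/- (Berndt–Evans–Wilson–Shor recursion, equivalent form) For all integers n ≥ 1 and 0 ≤ k ≤ n−1, Q_{n,k}(x+1) = Q_{n,k}(x) + (n+k−1)·Q_{n−1,k}(x+1), as an identity in ℚ[x], where P(x+1) denotes the composition of the polynomial P with x+1. -/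
open Polynomial

lemma rsQ_zero : ∀ (n : ℕ) (k : ℤ), (k < 0 ∨ (n : ℤ) ≤ k) → ramanujanShorQ n k = 0
  | 0, k, _ => rfl
  | 1, k, h => by
      simp only [ramanujanShorQ]
      rw [if_neg]
      omega
  | (n+2), k, h => by
      simp only [ramanujanShorQ]
      rw [if_neg]
      push_cast at h ⊢
      omega

lemma rsQ_rec (n : ℕ) (k : ℤ) :
    ramanujanShorQ (n+2) k =
      (X + C ((n : ℚ) + 1)) * ramanujanShorQ (n + 1) k
        + C (((n : ℤ) + k : ℤ) : ℚ) * ramanujanShorQ (n + 1) (k - 1) := by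
  by_cases h : 0 ≤ k ∧ k ≤ (n : ℤ) + 1
  · show ramanujanShorQ (n+2) k = _
    simp only [ramanujanShorQ, if_pos h]
  · have h0 : ramanujanShorQ (n+2) k = 0 := by
      simp only [ramanujanShorQ]; rw [if_neg h]
    rw [h0, rsQ_zero (n+1) k (by push_cast; omega),
      rsQ_zero (n+1) (k-1) (by push_cast; omega)]
    ring

lemma rsQ_aux : ∀ (n : ℕ) (k : ℤ),
    (ramanujanShorQ (n+1) k).comp (X + 1)
      = ramanujanShorQ (n+1) k
        + C (((n : ℤ) + k : ℤ) : ℚ) * (ramanujanShorQ n k).comp (X + 1) := by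
  intro n
  induction n using Nat.twoStepInduction with
  | zero =>
    intro k
    simp only [ramanujanShorQ]
    split_ifs <;> simp
  | one =>
    intro k
    rw [rsQ_rec 0 k]
    rcases eq_or_ne k 0 with rfl | hk0
    · norm_num [ramanujanShorQ, add_comp, mul_comp, X_comp, C_comp]
    · rcases eq_or_ne k 1 with rfl | hk1
      · norm_num [ramanujanShorQ, add_comp, mul_comp, X_comp, C_comp]
      · rw [show ramanujanShorQ 1 k = 0 from by
            simp only [ramanujanShorQ]; rw [if_neg hk0],
          show ramanujanShorQ 1 (k - 1) = 0 from by
            simp only [ramanujanShorQ]; rw [if_neg (by omega)]]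
        simp
  | more n ih1 ih2 =>
    intro k
    rw [rsQ_rec (n+1) k]
    have E1 : (ramanujanShorQ (n+2) k).comp (X + 1)
        = (X + 1 + C ((n : ℚ) + 1)) * (ramanujanShorQ (n+1) k).comp (X + 1)
          + C (((n : ℤ) + k : ℤ) : ℚ) * (ramanujanShorQ (n+1) (k-1)).comp (X + 1) := by
      rw [rsQ_rec n k]
      simp [add_comp, mul_comp]
    have E2 := ih2 k
    have E4 := ih2 (k - 1)
    simp only [add_comp, mul_comp, X_comp, C_comp] at E1 E2 E4 ⊢
    push_cast at E1 E2 E4 ⊢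
    simp only [C_add, C_sub, C_1, map_ofNat] at E1 E2 E4 ⊢
    linear_combination (X + C ((n : ℚ)) + 2) * E2 + (C ((n : ℚ)) + 1 + C ((k : ℚ))) * E4
      - (C ((n : ℚ)) + 1 + C ((k : ℚ))) * E1

theorem berndt_evans_wilson_shor_equiv (n : ℕ) (hn : 1 ≤ n) (k : ℤ) (hk0 : 0 ≤ k)
    (hk1 : k ≤ (n : ℤ) - 1) :
    (ramanujanShorQ n k).comp (Polynomial.X + 1)
      = ramanujanShorQ n k
        + Polynomial.C (((n : ℤ) + k - 1 : ℤ) : ℚ)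
          * (ramanujanShorQ (n - 1) k).comp (Polynomial.X + 1) := by
  obtain ⟨m, rfl⟩ : ∃ m, n = m + 1 := ⟨n - 1, by omega⟩
  simp only [Nat.add_sub_cancel]
  rw [show (((m + 1 : ℕ) : ℤ) + k - 1) = ((m : ℤ) + k) by push_cast; ring]
  exact rsQ_aux m k
end

section
/- For every integer n ≥ 1, φ(D^{n}(y)) = n^{n} (a constant polynomial in ℚ[X]). -/
/-- `Gq n a b = ∑_j (n)_j · C(a+j-2, j) · (b+n)^(n-j)`, which equals
`φ(Dⁿ(y^a w^b))` for `a ≥ 1`. -/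
noncomputable def Gq (n a b : ℕ) : ℚ :=
  ∑ j ∈ Finset.range (n + 1),
    (n.descFactorial j : ℚ) * ((a + j - 2).choose j : ℚ) * ((b + n : ℕ) : ℚ) ^ (n - j)

lemma Gq_zero (a b : ℕ) : Gq 0 a b = 1 := by
  simp [Gq]

lemma Gq_one_zero (n : ℕ) : Gq n 1 0 = (n : ℚ) ^ n := by
  unfold Gq
  rw [Finset.sum_eq_single 0]
  · simp
  · intro j hj hj0
    have h1 : 1 + j - 2 < j := by omega
    rw [Nat.choose_eq_zero_of_lt h1]
    ring
  · intro h
    exact absurd (Finset.mem_range.mpr (by omega)) h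

/-- Pure binomial key identity over ℚ. -/
lemma key_choose (n a j : ℕ) (ha : 1 ≤ a) :
    ((n : ℚ) + 1) * ((a + j - 1).choose (j + 1) : ℚ)
      = ((n : ℚ) - j) * ((a + j).choose (j + 1) : ℚ)
        + ((a : ℚ) + j - (n + 1)) * ((a + j - 1).choose j : ℚ) := by
  set c := a + j - 1 with hc
  have hc1 : c + 1 = a + j := by omega
  have hpascal : (a + j).choose (j + 1) = c.choose j + c.choose (j + 1) := by
    rw [← hc1, Nat.choose_succ_succ]
  have hcj : c - j = a - 1 := by omega
  have hright : c.choose (j + 1) * (j + 1) = c.choose j * (a - 1) := by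
    rw [Nat.choose_succ_right_eq, hcj]
  have hrightQ : (c.choose (j + 1) : ℚ) * ((j : ℚ) + 1)
      = (c.choose j : ℚ) * ((a : ℚ) - 1) := by
    have := congrArg (fun m : ℕ => (m : ℚ)) hright
    push_cast at this
    have haQ : ((a - 1 : ℕ) : ℚ) = (a : ℚ) - 1 := by
      have : (1 : ℕ) ≤ a := ha
      push_cast [Nat.cast_sub this]
      ring
    rw [haQ] at this
    · push_cast at this ⊢
      linarith [this]
  have hpascalQ : ((a + j).choose (j + 1) : ℚ)
      = (c.choose j : ℚ) + (c.choose (j + 1) : ℚ) := by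
    rw [hpascal]; push_cast; ring
  rw [hpascalQ]
  linear_combination hrightQ

/-- Per-term identity used in the recurrence for `Gq`. -/
lemma key_term (n a j : ℕ) (ha : 1 ≤ a) (hj : j ≤ n) :
    (((n + 1).descFactorial (j + 1) : ℕ) : ℚ) * ((a + (j + 1) - 2).choose (j + 1) : ℚ)
      = ((n.descFactorial (j + 1) : ℕ) : ℚ) * ((a + (j + 1) - 1).choose (j + 1) : ℚ)
        + ((n.descFactorial j : ℕ) : ℚ) * ((a : ℚ) + j - (n + 1))
            * ((a + j - 1).choose j : ℚ) := by
  have h1 : a + (j + 1) - 2 = a + j - 1 := by omega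
  have h2 : a + (j + 1) - 1 = a + j := by omega
  rw [h1, h2, Nat.succ_descFactorial_succ, Nat.descFactorial_succ]
  have hnj : ((n - j : ℕ) : ℚ) = (n : ℚ) - j := by
    push_cast [Nat.cast_sub hj]; ring
  push_cast [hnj]
  linear_combination (n.descFactorial j : ℚ) * key_choose n a j ha

/-- `a · C(a+j, j) = (a+j) · C(a+j-1, j)` for `a ≥ 1`. -/
lemma committee (a j : ℕ) (ha : 1 ≤ a) :
    a * (a + j).choose j = (a + j) * (a + j - 1).choose j := by
  have h1 : a + j = (a + j - 1) + 1 := by omega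
  have h2 : (a + j) * (a + j - 1).choose j = (a + j).choose (j + 1) * (j + 1) := by
    have hs := Nat.add_one_mul_choose_eq (a + j - 1) j
    rw [← h1] at hs
    exact hs
  have h3 : (a + j).choose (j + 1) * (j + 1) = (a + j).choose j * (a + j - j) :=
    Nat.choose_succ_right_eq _ _
  have h4 : a + j - j = a := by omega
  rw [h2, h3, h4, Nat.mul_comm]

/-- The fundamental recurrence for `Gq`. -/
lemma Gq_rec (n a b : ℕ) (ha : 1 ≤ a) :
    Gq (n + 1) a b = (a : ℚ) * Gq n (a + 2) (b + 1) + (b : ℚ) * Gq n (a + 1) (b + 1) := by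
  have hp : b + (n + 1) = b + 1 + n := by omega
  unfold Gq
  rw [hp]
  set p : ℕ := b + 1 + n with hpdef
  -- abbreviations
  have LHS_eq : ∑ j ∈ Finset.range (n + 1 + 1),
      ((n + 1).descFactorial j : ℚ) * ((a + j - 2).choose j : ℚ) * (p : ℚ) ^ (n + 1 - j)
      = ∑ j ∈ Finset.range (n + 1),
          ((n.descFactorial j : ℚ) * ((a + j - 1).choose j : ℚ) * (p : ℚ) ^ (n + 1 - j)
           + (n.descFactorial j : ℚ) * ((a : ℚ) + j - (n + 1))
              * ((a + j - 1).choose j : ℚ) * (p : ℚ) ^ (n - j)) := by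
    rw [Finset.sum_range_succ']
    have hT0 : ((n + 1).descFactorial 0 : ℚ) * ((a + 0 - 2).choose 0 : ℚ) * (p : ℚ) ^ (n + 1 - 0)
        = (n.descFactorial 0 : ℚ) * ((a + 0 - 1).choose 0 : ℚ) * (p : ℚ) ^ (n + 1 - 0) := by
      simp
    rw [hT0]
    have hsplit : ∀ j ∈ Finset.range (n + 1),
        ((n + 1).descFactorial (j + 1) : ℚ) * ((a + (j + 1) - 2).choose (j + 1) : ℚ)
            * (p : ℚ) ^ (n + 1 - (j + 1))
        = (n.descFactorial (j + 1) : ℚ) * ((a + (j + 1) - 1).choose (j + 1) : ℚ)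
            * (p : ℚ) ^ (n + 1 - (j + 1))
          + (n.descFactorial j : ℚ) * ((a : ℚ) + j - (n + 1))
              * ((a + j - 1).choose j : ℚ) * (p : ℚ) ^ (n - j) := by
      intro j hj
      have hjn : j ≤ n := by
        have := Finset.mem_range.mp hj; omega
      have hexp : n + 1 - (j + 1) = n - j := by omega
      rw [hexp]
      linear_combination ((p : ℚ) ^ (n - j)) * key_term n a j ha hjn
    rw [Finset.sum_congr rfl hsplit, Finset.sum_add_distrib]
    -- now: (∑ A (j+1)) + (∑ B j) + A 0 = ∑ (A j + B j)
    have hA : (∑ j ∈ Finset.range (n + 1),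
        (n.descFactorial (j + 1) : ℚ) * ((a + (j + 1) - 1).choose (j + 1) : ℚ)
          * (p : ℚ) ^ (n + 1 - (j + 1)))
        + (n.descFactorial 0 : ℚ) * ((a + 0 - 1).choose 0 : ℚ) * (p : ℚ) ^ (n + 1 - 0)
        = ∑ j ∈ Finset.range (n + 1 + 1),
            (n.descFactorial j : ℚ) * ((a + j - 1).choose j : ℚ) * (p : ℚ) ^ (n + 1 - j) :=
      (Finset.sum_range_succ' (fun j => (n.descFactorial j : ℚ)
        * ((a + j - 1).choose j : ℚ) * (p : ℚ) ^ (n + 1 - j)) (n + 1)).symm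
    have hAtop : ∑ j ∈ Finset.range (n + 1 + 1),
        (n.descFactorial j : ℚ) * ((a + j - 1).choose j : ℚ) * (p : ℚ) ^ (n + 1 - j)
        = ∑ j ∈ Finset.range (n + 1),
            (n.descFactorial j : ℚ) * ((a + j - 1).choose j : ℚ) * (p : ℚ) ^ (n + 1 - j) := by
      rw [Finset.sum_range_succ]
      have : n.descFactorial (n + 1) = 0 := by
        simp [Nat.descFactorial_eq_zero_iff_lt]
      rw [this]
      push_cast
      ring
    rw [Finset.sum_add_distrib, add_right_comm, hA, hAtop]
  rw [LHS_eq, Finset.mul_sum, Finset.mul_sum, ← Finset.sum_add_distrib]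
  apply Finset.sum_congr rfl
  intro j hj
  have hjn : j ≤ n := by have := Finset.mem_range.mp hj; omega
  -- pointwise: A j + B j = a * (dF * C(a+j, j) * p^(n-j)) + b * (dF * C(a+j-1, j) * p^(n-j))
  have h1 : a + 2 + j - 2 = a + j := by omega
  have h2 : a + 1 + j - 2 = a + j - 1 := by omega
  rw [h1, h2]
  have hcom : ((a : ℚ)) * ((a + j).choose j : ℚ) = ((a : ℚ) + j) * ((a + j - 1).choose j : ℚ) := by
    have := congrArg (fun m : ℕ => (m : ℚ)) (committee a j ha)
    push_cast at this
    have haj : ((a + j : ℕ) : ℚ) = (a : ℚ) + j := by push_cast; ring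
    calc ((a : ℚ)) * ((a + j).choose j : ℚ) = ((a + j : ℕ) : ℚ) * ((a + j - 1).choose j : ℚ) := by
          push_cast at this ⊢; linarith [this]
      _ = ((a : ℚ) + j) * ((a + j - 1).choose j : ℚ) := by rw [haj]
  have hpow : (p : ℚ) ^ (n + 1 - j) = (p : ℚ) * (p : ℚ) ^ (n - j) := by
    have : n + 1 - j = (n - j) + 1 := by omega
    rw [this, pow_succ]; ring
  have hpQ : (p : ℚ) = (b : ℚ) + 1 + n := by push_cast [hpdef]; ring
  rw [hpow]
  linear_combination (-((n.descFactorial j : ℚ) * (p : ℚ) ^ (n - j))) * hcom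
    + ((n.descFactorial j : ℚ) * ((a + j - 1).choose j : ℚ) * (p : ℚ) ^ (n - j)) * hpQ

open MvPolynomial in
theorem phi_dn_y (D : Derivation ℚ (MvPolynomial (Fin 4) ℚ) (MvPolynomial (Fin 4) ℚ))
    (hDa : D (X 0) = X 0 * X 1 * X 2)
    (hDx : D (X 1) = X 1 * X 2 * X 3)
    (hDy : D (X 2) = (X 2) ^ 3 * X 3)
    (hDw : D (X 3) = X 2 * (X 3) ^ 2)
    (φ : MvPolynomial (Fin 4) ℚ →ₐ[ℚ] Polynomial ℚ)
    (hφa : φ (X 0) = 1) (hφx : φ (X 1) = Polynomial.X)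
    (hφy : φ (X 2) = 1) (hφw : φ (X 3) = 1)
    (n : ℕ) (hn : 1 ≤ n) :
    φ ((⇑D)^[n] (X 2)) = (n : Polynomial ℚ) ^ n := by
  -- derivation applied to a monomial y^a w^b
  have hDmon : ∀ a b : ℕ, 1 ≤ a →
      D (X 2 ^ a * X 3 ^ b)
        = (a : ℚ) • (X 2 ^ (a + 2) * X 3 ^ (b + 1))
          + (b : ℚ) • (X 2 ^ (a + 1) * X 3 ^ (b + 1)) := by
    intro a b ha
    obtain ⟨a', rfl⟩ : ∃ a', a = a' + 1 := ⟨a - 1, by omega⟩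
    rw [Derivation.leibniz, Derivation.leibniz_pow, Derivation.leibniz_pow, hDy, hDw]
    rcases b with _ | b'
    · simp only [smul_eq_mul, nsmul_eq_mul, MvPolynomial.smul_eq_C_mul, map_add, map_one,
        map_natCast, Nat.cast_zero, Nat.cast_ofNat, Nat.cast_add, Nat.cast_one, pow_zero,
        Nat.zero_eq, CharP.cast_eq_zero, zero_mul, mul_zero, add_zero, mul_one, one_mul]
      push_cast
      simp only [map_zero, zero_mul, mul_zero, add_zero]
      ring
    · simp only [smul_eq_mul, nsmul_eq_mul, MvPolynomial.smul_eq_C_mul, map_add, map_one,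
        map_natCast, Nat.cast_add, Nat.cast_one]
      push_cast
      ring
  -- linearity of the iterate
  have hiter : ∀ (m : ℕ) (c d : ℚ) (p q : MvPolynomial (Fin 4) ℚ),
      (⇑D)^[m] (c • p + d • q) = c • (⇑D)^[m] p + d • (⇑D)^[m] q := by
    intro m
    induction m with
    | zero => intro c d p q; simp
    | succ m ih =>
      intro c d p q
      rw [Function.iterate_succ_apply, Function.iterate_succ_apply,
        Function.iterate_succ_apply, map_add, D.map_smul, D.map_smul, ih]
  -- main strengthened claim
  have main : ∀ (m a b : ℕ), 1 ≤ a →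
      φ ((⇑D)^[m] (X 2 ^ a * X 3 ^ b)) = Polynomial.C (Gq m a b) := by
    intro m
    induction m with
    | zero =>
      intro a b ha
      simp [Gq_zero, map_mul, map_pow, hφy, hφw]
    | succ m ih =>
      intro a b ha
      rw [Function.iterate_succ_apply, hDmon a b ha, hiter, map_add, map_smul, map_smul,
        ih (a + 2) (b + 1) (by omega), ih (a + 1) (b + 1) (by omega),
        Gq_rec m a b ha]
      rw [map_add, map_mul, map_mul]
      simp [Polynomial.smul_C, smul_eq_mul]
  have hX2 : (X 2 : MvPolynomial (Fin 4) ℚ) = X 2 ^ 1 * X 3 ^ 0 := by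
    simp
  rw [hX2, main n 1 0 le_rfl, Gq_one_zero]
  rw [map_pow]
  simp [Polynomial.C_eq_natCast]
end

section
/- For every integer n ≥ 1, φ(D^{n}(y·w)) = (n+1)^{n} (a constant polynomial in ℚ[X]). -/
/-!
Only `y` and `w` matter: `D` maps `ℚ[y, w]` into itself, so `D^n (y w)` is the image of
`Dʸʷ^n (y w)` for the derivation `Dʸʷ : y ↦ y³w, w ↦ y w²` of `ℚ[y, w]`, and `φ` evaluates it at
`y = w = 1`. Let `T = ∑ n^(n-1) tⁿ / n!` be the tree function (`T = t e^T`). The power series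
`y(t) = 1 / (1 - T)` and `w(t) = e^T` solve `y' = y³w`, `w' = y w²` with `y(0) = w(0) = 1`, so the
value of `Dʸʷ^n (y w)` at `y = w = 1` is the `n`-th derivative at `0` of `y w = T' = ∑ (n+1)^n tⁿ / n!`,
that is `(n+1)^n`. The identities `T' = e^T / (1 - T)`, `(e^T)' = e^T T'` and
`T / (1 - T) = 1 / (1 - T) - 1` behind this are, coefficientwise, instances of Abel's identity
`∑ₖ C(n,k) x (x+k)^(k-1) (z+n-k)^(n-k) = (x+z+n)^n` and of its `x`-derivative at `x = 0`.
-/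

open Finset

section Abel

open Polynomial

variable {R : Type*} [CommRing R]

noncomputable def abelPoly (c : R) : ℕ → R[X]
  | 0 => 1
  | k + 1 => (X + C c) * (X + C (c + k + 1)) ^ k

@[simp] lemma abelPoly_zero (c : R) : abelPoly c 0 = 1 := rfl

lemma abelPoly_succ (c : R) (k : ℕ) :
    abelPoly c (k + 1) = (X + C c) * (X + C (c + k + 1)) ^ k := rfl

lemma derivative_abelPoly_succ (c : R) (k : ℕ) :
    derivative (abelPoly c (k + 1)) = ((k : R[X]) + 1) * abelPoly (c + 1) k := by
  cases k with
  | zero => simp [abelPoly_succ]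
  | succ k =>
    rw [abelPoly_succ, abelPoly_succ, derivative_mul, derivative_pow, derivative_X_add_C,
      derivative_X_add_C]
    simp only [map_add, map_one, map_natCast]
    push_cast
    ring

lemma eval_neg_abelPoly_succ (c : R) (k : ℕ) : (abelPoly c (k + 1)).eval (-c) = 0 := by
  simp [abelPoly_succ]

lemma coeff_one_abelPoly_zero_succ (k : ℕ) :
    (abelPoly (0 : R) (k + 1)).coeff 1 = (k + 1) ^ k := by
  rw [abelPoly_succ, map_zero, add_zero, zero_add, coeff_X_mul, coeff_X_add_C_pow]
  simp

lemma eval_abelPoly_zero_succ (x : R) (k : ℕ) :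
    (abelPoly (0 : R) (k + 1)).eval x = x * (x + k + 1) ^ k := by
  simp [abelPoly_succ, add_assoc]

lemma Polynomial.eq_of_derivative_eq_of_eval_eq [IsAddTorsionFree R] {p q : R[X]} (a : R)
    (hd : derivative p = derivative q) (he : p.eval a = q.eval a) : p = q := by
  rw [← sub_eq_zero]
  have h := eq_C_of_derivative_eq_zero (p := p - q) (by rw [derivative_sub, hd, sub_self])
  rw [h, C_eq_zero]
  simpa [he] using (congrArg (eval a) h).symm

variable [IsAddTorsionFree R]

/- Differentiating in `X` turns the case `n + 1` into `n + 1` times the case `n` with `c + 1`,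
and at `X = -c` only the term `k = 0` survives. -/
theorem abelPoly_convolution (n : ℕ) (c z : R) :
    ∑ p ∈ antidiagonal n, C (n.choose p.1 : R) * abelPoly c p.1 * C ((z + p.2) ^ p.2)
      = (X + C (c + z + n)) ^ n := by
  induction n generalizing c with
  | zero => simp
  | succ n ih =>
    refine eq_of_derivative_eq_of_eval_eq (-c) ?_ ?_
    · rw [derivative_sum, Nat.sum_antidiagonal_succ]
      simp only [derivative_mul, derivative_C, abelPoly_zero, derivative_one, mul_zero, zero_mul,
        add_zero, zero_add, derivative_abelPoly_succ]
      calc _ = ((n : R[X]) + 1) * ∑ p ∈ antidiagonal n,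
              C (n.choose p.1 : R) * abelPoly (c + 1) p.1 * C ((z + p.2) ^ p.2) := by
            rw [mul_sum]
            refine sum_congr rfl fun p _ => ?_
            have h := congrArg (Nat.cast : ℕ → R[X]) (Nat.add_one_mul_choose_eq n p.1)
            push_cast at h
            simp only [map_natCast]
            linear_combination (-C ((z + p.2) ^ p.2) * abelPoly (c + 1) p.1) * h
        _ = _ := by
            rw [ih, derivative_X_add_C_pow]
            push_cast
            simp only [map_add, map_one, map_natCast]
            ring
    · rw [eval_finsetSum, Nat.sum_antidiagonal_succ]
      simp [eval_neg_abelPoly_succ]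
      ring

theorem sum_choose_mul_eval_abelPoly (n : ℕ) (x z : R) :
    ∑ p ∈ antidiagonal n, n.choose p.1 * (abelPoly 0 p.1).eval x * (z + p.2) ^ p.2
      = (x + z + n) ^ n := by
  simpa [eval_finsetSum, add_assoc] using congrArg (eval x) (abelPoly_convolution n 0 z)

theorem sum_choose_mul_coeff_one_abelPoly (n : ℕ) (z : R) :
    ∑ p ∈ antidiagonal n, n.choose p.1 * (abelPoly 0 p.1).coeff 1 * (z + p.2) ^ p.2
      = n * (z + n) ^ (n - 1) := by
  have h := congrArg (coeff · 1) (abelPoly_convolution n 0 z)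
  simp only [finsetSum_coeff, coeff_C_mul, coeff_mul_C, coeff_X_add_C_pow, zero_add,
    Nat.choose_one_right] at h
  rw [h, mul_comm]

end Abel

section Egf

open PowerSeries

variable {K : Type*} [Field K]

noncomputable def egf (f : ℕ → K) : K⟦X⟧ := mk fun n => f n / n.factorial

@[simp] lemma coeff_egf (f : ℕ → K) (n : ℕ) : coeff n (egf f) = f n / n.factorial := coeff_mk _ _

@[simp] lemma constantCoeff_egf (f : ℕ → K) : constantCoeff (egf f) = f 0 := by
  simp [← coeff_zero_eq_constantCoeff_apply]

variable [CharZero K]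

lemma egf_mul (f g : ℕ → K) :
    egf f * egf g = egf fun n => ∑ p ∈ antidiagonal n, n.choose p.1 * f p.1 * g p.2 := by
  ext n
  simp only [coeff_mul, coeff_egf, sum_div]
  refine sum_congr rfl fun p hp => ?_
  obtain rfl := HasAntidiagonal.mem_antidiagonal.mp hp
  have h := congrArg (Nat.cast : ℕ → K) (Nat.add_choose_mul_factorial_mul_factorial p.1 p.2)
  push_cast at h
  have hc : ((p.1 + p.2).choose p.2 : K) ≠ 0 := by exact_mod_cast (Nat.choose_pos (by omega)).ne'
  rw [Nat.choose_symm_add, ← h]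
  field_simp

lemma derivative_egf (f : ℕ → K) : d⁄dX K (egf f) = egf fun n => f (n + 1) := by
  ext n
  rw [coeff_derivative, coeff_egf, coeff_egf, Nat.factorial_succ]
  push_cast
  field_simp

end Egf

namespace TreeFunction

open PowerSeries

/- `abelPoly 0 n = x (x + n)^(n-1)` is `n!` times the `tⁿ`-coefficient of `e^(x T)`, so `T` and
`e^T` are read off its linear coefficient and its value at `x = 1`. -/
noncomputable def T : ℚ⟦X⟧ := egf fun n => (abelPoly (0 : ℚ) n).coeff 1

noncomputable def expT : ℚ⟦X⟧ := egf fun n => (abelPoly (0 : ℚ) n).eval 1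

noncomputable def invOneSubT : ℚ⟦X⟧ := egf fun n => (n : ℚ) ^ n

lemma derivative_T : d⁄dX ℚ T = egf fun n => ((n : ℚ) + 1) ^ n := by
  rw [T, derivative_egf]
  simp only [coeff_one_abelPoly_zero_succ]

lemma expT_mul_invOneSubT : expT * invOneSubT = d⁄dX ℚ T := by
  rw [expT, invOneSubT, egf_mul, derivative_T]
  congr 1 with n
  simpa [add_comm] using sum_choose_mul_eval_abelPoly n (1 : ℚ) 0

lemma expT_mul_derivative_T : expT * d⁄dX ℚ T = d⁄dX ℚ expT := by
  rw [expT, derivative_T, egf_mul, derivative_egf]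
  congr 1 with n
  rw [eval_abelPoly_zero_succ]
  convert sum_choose_mul_eval_abelPoly n (1 : ℚ) 1 using 1 <;> ring_nf

lemma T_mul_invOneSubT : T * invOneSubT = invOneSubT - 1 := by
  ext n
  rw [T, invOneSubT, egf_mul, map_sub, coeff_egf, coeff_egf, coeff_one]
  cases n with
  | zero => simp [Polynomial.coeff_one]
  | succ n =>
    have h := sum_choose_mul_coeff_one_abelPoly (n + 1) (0 : ℚ)
    simp only [zero_add] at h
    rw [h]
    simp [pow_succ, mul_comm]

lemma derivative_expT : d⁄dX ℚ expT = invOneSubT * expT ^ 2 := by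
  rw [← expT_mul_derivative_T, ← expT_mul_invOneSubT]
  ring

lemma derivative_invOneSubT : d⁄dX ℚ invOneSubT = invOneSubT ^ 3 * expT := by
  have h := congrArg (d⁄dX ℚ) T_mul_invOneSubT
  rw [Derivation.leibniz, map_sub, Derivation.map_one_eq_zero, sub_zero, smul_eq_mul, smul_eq_mul,
    ← expT_mul_invOneSubT] at h
  linear_combination (d⁄dX ℚ invOneSubT) * T_mul_invOneSubT - invOneSubT * h

lemma coeff_invOneSubT_mul_expT (n : ℕ) :
    coeff n (invOneSubT * expT) = ((n : ℚ) + 1) ^ n / n.factorial := by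
  rw [mul_comm, expT_mul_invOneSubT, derivative_T, coeff_egf]

end TreeFunction

section Derivation

open MvPolynomial

theorem MvPolynomial.semiconj_derivation_of_X {σ R B : Type*} [CommSemiring R] [CommSemiring B]
    [Algebra R B] (g : MvPolynomial σ R →ₐ[R] B)
    (D : Derivation R (MvPolynomial σ R) (MvPolynomial σ R)) (E : Derivation R B B)
    (h : ∀ i, g (D (X i)) = E (g (X i))) : Function.Semiconj g D E := by
  intro p
  induction p using MvPolynomial.induction_on with
  | C a => simp [← algebraMap_eq]
  | add p q hp hq => simp only [map_add, hp, hq]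
  | mul_X p i hp => simp only [Derivation.leibniz, smul_eq_mul, map_add, map_mul, hp, h]

/- The grammar restricted to `ℚ[y, w]`, with `X 0 = y` and `X 1 = w`. -/
noncomputable def derivationYW : Derivation ℚ (MvPolynomial (Fin 2) ℚ) (MvPolynomial (Fin 2) ℚ) :=
  mkDerivation ℚ ![X 0 ^ 3 * X 1, X 0 * X 1 ^ 2]

open TreeFunction in
theorem eval_one_iterate_derivationYW (n : ℕ) :
    eval 1 (derivationYW^[n] (X 0 * X 1)) = ((n : ℚ) + 1) ^ n := by
  set ψ : MvPolynomial (Fin 2) ℚ →ₐ[ℚ] PowerSeries ℚ := aeval ![invOneSubT, expT]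
  have hψ : Function.Semiconj ψ derivationYW (PowerSeries.derivative ℚ) := by
    refine semiconj_derivation_of_X _ _ _ fun i => ?_
    fin_cases i <;> simp [ψ, derivationYW, mkDerivation_X, derivative_expT, derivative_invOneSubT]
  have hconst (p) : PowerSeries.constantCoeff (ψ p) = eval 1 p := by
    rw [← RingHom.toRatAlgHom_apply, comp_aeval_apply, aeval_eq_eval]
    congr 2 with i
    fin_cases i <;> simp [invOneSubT, expT]
  rw [← hconst, (hψ.iterate_right n).eq, PowerSeries.constantCoeff_iterate_derivative, map_mul,
    aeval_X, aeval_X]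
  simp only [Matrix.cons_val_zero, Matrix.cons_val_one, coeff_invOneSubT_mul_expT]
  field_simp

end Derivation

open MvPolynomial in
theorem phi_dn_yw_general (D : Derivation ℚ (MvPolynomial (Fin 4) ℚ) (MvPolynomial (Fin 4) ℚ))
    (hDy : D (X 2) = (X 2) ^ 3 * X 3)
    (hDw : D (X 3) = X 2 * (X 3) ^ 2)
    (φ : MvPolynomial (Fin 4) ℚ →ₐ[ℚ] Polynomial ℚ)
    (hφy : φ (X 2) = 1) (hφw : φ (X 3) = 1)
    (n : ℕ) :
    φ ((⇑D)^[n] (X 2 * X 3)) = ((n : Polynomial ℚ) + 1) ^ n := by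
  set ι : Fin 2 → Fin 4 := ![2, 3]
  have hD : Function.Semiconj (rename ι) derivationYW D := by
    refine semiconj_derivation_of_X _ _ _ fun i => ?_
    fin_cases i <;> simp [ι, derivationYW, mkDerivation_X, hDy, hDw]
  have hφ : φ.comp (rename ι) = (Algebra.ofId ℚ (Polynomial ℚ)).comp (aeval 1) := by
    ext i
    fin_cases i <;> simp [ι, hφy, hφw]
  have hyw : X 2 * X 3 = rename ι (X 0 * X 1 : MvPolynomial (Fin 2) ℚ) := by simp [ι]
  rw [hyw, ← (hD.iterate_right n).eq, ← AlgHom.comp_apply, hφ, AlgHom.comp_apply, aeval_eq_eval,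
    eval_one_iterate_derivationYW]
  simp

open MvPolynomial in
theorem phi_dn_yw (D : Derivation ℚ (MvPolynomial (Fin 4) ℚ) (MvPolynomial (Fin 4) ℚ))
    (hDa : D (X 0) = X 0 * X 1 * X 2)
    (hDx : D (X 1) = X 1 * X 2 * X 3)
    (hDy : D (X 2) = (X 2) ^ 3 * X 3)
    (hDw : D (X 3) = X 2 * (X 3) ^ 2)
    (φ : MvPolynomial (Fin 4) ℚ →ₐ[ℚ] Polynomial ℚ)
    (hφa : φ (X 0) = 1) (hφx : φ (X 1) = Polynomial.X)
    (hφy : φ (X 2) = 1) (hφw : φ (X 3) = 1)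
    (n : ℕ) (hn : 1 ≤ n) :
    φ ((⇑D)^[n] (X 2 * X 3)) = ((n : Polynomial ℚ) + 1) ^ n :=
  phi_dn_yw_general D hDy hDw φ hφy hφw n
end

section
/- For all integers n ≥ 1 and r ≥ 0, φ(D^{n}(a·x^{r})) = X^{r}·(X+r)·(X+r+n)^{n−1}, as an identity in ℚ[X]. -/
/-- rising factorial: `asc a k = a (a+1) ⋯ (a+k-1)`. -/
def asc (a : ℚ) : ℕ → ℚ
  | 0 => 1
  | k+1 => asc a k * (a + k)

lemma asc_succ (a : ℚ) (k : ℕ) : asc a (k+1) = asc a k * (a + k) := rfl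

lemma asc_succ_left (a : ℚ) (k : ℕ) : asc a (k+1) = a * asc (a+1) k := by
  induction k with
  | zero => simp [asc]
  | succ k ih =>
      rw [asc_succ, ih, asc_succ]
      push_cast; ring

lemma coeff_id (n k : ℕ) (a : ℚ) :
    (((n+1).choose (k+1) : ℚ)) * asc a (k+1)
      = ((n.choose (k+1) : ℚ)) * asc (a+1) (k+1)
        + ((n.choose k : ℚ)) * ((a+1) * asc (a+2) k)
        - ((n.choose k : ℚ)) * ((n:ℚ)+1) * asc (a+1) k := by
  have hp : (((n+1).choose (k+1) : ℕ) : ℚ) = (n.choose k : ℚ) + (n.choose (k+1) : ℚ) := by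
    rw [Nat.choose_succ_succ]; push_cast; ring
  have hc : ((n:ℚ)+1) * (n.choose k : ℚ) = (((n+1).choose (k+1) : ℕ) : ℚ) * ((k:ℚ)+1) := by
    have := Nat.add_one_mul_choose_eq n k
    exact_mod_cast congrArg (Nat.cast (R := ℚ)) this
  rw [hp] at hc
  rw [asc_succ_left a k,
    show (a+1) * asc (a+2) k = asc (a+1) (k+1) by
      rw [asc_succ_left (a+1) k, show a+1+1 = a+2 by ring],
    asc_succ (a+1) k, hp]
  linear_combination asc (a+1) k * hc

/-- The key polynomial family. -/
noncomputable def S (n : ℕ) (a : ℚ) (u : Polynomial ℚ) : Polynomial ℚ :=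
  ∑ k ∈ Finset.range (n+1), Polynomial.C ((n.choose k : ℚ) * asc a k) * u ^ (n - k)

lemma S_congr (n : ℕ) {a a' : ℚ} {u u' : Polynomial ℚ} (ha : a = a') (hu : u = u') :
    S n a u = S n a' u' := by rw [ha, hu]

lemma S_zero (a : ℚ) (u : Polynomial ℚ) : S 0 a u = 1 := by
  simp [S, asc]

lemma S_rec (n : ℕ) (a : ℚ) (u : Polynomial ℚ) :
    S (n+1) a u
      = (u - Polynomial.C ((n:ℚ)+1)) * S n (a+1) u + Polynomial.C (a+1) * S n (a+2) u := by
  have hL : S (n+1) a u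
      = u^(n+1) + ∑ k ∈ Finset.range (n+1),
          Polynomial.C ((((n+1).choose (k+1) : ℕ) : ℚ) * asc a (k+1)) * u ^ (n-k) := by
    unfold S
    rw [Finset.sum_range_succ' _ (n+1)]
    simp only [Nat.succ_sub_succ_eq_sub, Nat.choose_zero_right, Nat.cast_one, Nat.sub_zero]
    rw [show asc a 0 = 1 from rfl, mul_one, Polynomial.C_1]
    ring
  have hMul : u * S n (a+1) u
      = u^(n+1) + ∑ k ∈ Finset.range (n+1),
          Polynomial.C ((n.choose (k+1) : ℚ) * asc (a+1) (k+1)) * u ^ (n-k) := by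
    unfold S
    rw [Finset.mul_sum, Finset.sum_range_succ' _ n]
    have h0 : u * (Polynomial.C ((n.choose 0 : ℚ) * asc (a+1) 0) * u ^ (n - 0)) = u^(n+1) := by
      simp [show asc (a+1) 0 = 1 from rfl, pow_succ]
      ring
    rw [h0]
    have hstep : ∀ k ∈ Finset.range n,
        u * (Polynomial.C ((n.choose (k+1) : ℚ) * asc (a+1) (k+1)) * u ^ (n - (k+1)))
          = Polynomial.C ((n.choose (k+1) : ℚ) * asc (a+1) (k+1)) * u ^ (n-k) := by
      intro k hk
      have hk' : k < n := Finset.mem_range.mp hk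
      have he : n - (k+1) + 1 = n - k := by omega
      rw [show u ^ (n-k) = u ^ (n-(k+1)) * u by rw [← pow_succ, he]]
      ring
    rw [Finset.sum_congr rfl hstep]
    rw [Finset.sum_range_succ]
    simp [Nat.choose_succ_self]
    ring
  rw [hL, sub_mul, hMul]
  simp only [S]
  rw [Finset.mul_sum, Finset.mul_sum]
  have hterm : ∀ k ∈ Finset.range (n+1),
      Polynomial.C ((((n+1).choose (k+1) : ℕ) : ℚ) * asc a (k+1)) * u ^ (n-k)
        = Polynomial.C ((n.choose (k+1) : ℚ) * asc (a+1) (k+1)) * u ^ (n-k)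
          - Polynomial.C ((n:ℚ)+1) * (Polynomial.C ((n.choose k : ℚ) * asc (a+1) k) * u ^ (n-k))
          + Polynomial.C (a+1) * (Polynomial.C ((n.choose k : ℚ) * asc (a+2) k) * u ^ (n-k)) := by
    intro k _
    rw [coeff_id n k a]
    simp only [Polynomial.C_add, Polynomial.C_sub, Polynomial.C_mul]
    ring
  rw [Finset.sum_congr rfl hterm, Finset.sum_add_distrib, Finset.sum_sub_distrib]
  ring

lemma asc_neg_one (k : ℕ) : asc (-1) (k+2) = 0 := by
  induction k with
  | zero => norm_num [asc]
  | succ k ih => rw [asc_succ, ih, zero_mul]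

lemma S_neg_one (m : ℕ) (u : Polynomial ℚ) :
    S (m+1) (-1) u = (u - Polynomial.C ((m:ℚ)+1)) * u^m := by
  unfold S
  rw [Finset.sum_range_succ' _ (m+1), Finset.sum_range_succ' _ m]
  have hz : ∀ k ∈ Finset.range m,
      Polynomial.C (((m+1).choose (k+1+1) : ℚ) * asc (-1) (k+1+1)) * u ^ (m+1-(k+1+1)) = 0 := by
    intro k _
    rw [asc_neg_one k]
    simp
  rw [Finset.sum_congr rfl hz, Finset.sum_const_zero]
  have h1 : asc (-1) 1 = -1 := by norm_num [asc]
  have h0 : asc (-1) 0 = 1 := rfl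
  rw [h0, h1]
  simp only [Nat.choose_zero_right, Nat.choose_one_right]
  push_cast [Polynomial.C_eq_natCast, Polynomial.C_mul, Polynomial.C_add, Polynomial.C_neg, Polynomial.C_1, Polynomial.C_0, Nat.choose_one_right]
  ring

open MvPolynomial

section main

variable (D : Derivation ℚ (MvPolynomial (Fin 4) ℚ) (MvPolynomial (Fin 4) ℚ))

lemma iterD_add (n : ℕ) : ∀ p q : MvPolynomial (Fin 4) ℚ,
    (⇑D)^[n] (p + q) = (⇑D)^[n] p + (⇑D)^[n] q := by
  induction n with
  | zero => intro p q; simp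
  | succ n ih =>
      intro p q
      rw [Function.iterate_succ_apply, map_add, ih, Function.iterate_succ_apply,
        Function.iterate_succ_apply]

lemma iterD_nsmul (n : ℕ) (c : ℕ) : ∀ p : MvPolynomial (Fin 4) ℚ,
    (⇑D)^[n] (c • p) = c • (⇑D)^[n] p := by
  induction n with
  | zero => intro p; simp
  | succ n ih =>
      intro p
      rw [Function.iterate_succ_apply, map_nsmul, ih, Function.iterate_succ_apply]

lemma Dmono (hDa : D (X 0) = X 0 * X 1 * X 2)
    (hDx : D (X 1) = X 1 * X 2 * X 3)
    (hDy : D (X 2) = (X 2) ^ 3 * X 3)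
    (hDw : D (X 3) = X 2 * (X 3) ^ 2)
    (r s t : ℕ) :
    D (X 0 * X 1^r * X 2^s * X 3^t)
      = X 0 * X 1^(r+1) * X 2^(s+1) * X 3^t
        + (r+t) • (X 0 * X 1^r * X 2^(s+1) * X 3^(t+1))
        + s • (X 0 * X 1^r * X 2^(s+2) * X 3^(t+1)) := by
  cases r <;> cases s <;> cases t <;>
    · simp only [Derivation.leibniz, Derivation.leibniz_pow, hDa, hDx, hDy, hDw,
        smul_eq_mul, nsmul_eq_mul, Nat.succ_sub_one, pow_zero, Nat.cast_zero,
        Nat.cast_succ, Nat.cast_add, zero_mul, mul_zero, zero_add, add_zero, mul_one, one_mul]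
      push_cast
      ring

lemma main_lemma (hDa : D (X 0) = X 0 * X 1 * X 2)
    (hDx : D (X 1) = X 1 * X 2 * X 3)
    (hDy : D (X 2) = (X 2) ^ 3 * X 3)
    (hDw : D (X 3) = X 2 * (X 3) ^ 2)
    (φ : MvPolynomial (Fin 4) ℚ →ₐ[ℚ] Polynomial ℚ)
    (hφa : φ (X 0) = 1) (hφx : φ (X 1) = Polynomial.X)
    (hφy : φ (X 2) = 1) (hφw : φ (X 3) = 1)
    (n : ℕ) : ∀ r s t : ℕ,
    φ ((⇑D)^[n] (X 0 * X 1^r * X 2^s * X 3^t))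
      = Polynomial.X ^ r * S n ((s:ℚ) - 1)
          (Polynomial.X + Polynomial.C ((r:ℚ) + (t:ℚ) + (n:ℚ))) := by
  induction n with
  | zero =>
      intro r s t
      simp [map_mul, map_pow, hφa, hφx, hφy, hφw, S_zero]
  | succ n ih =>
      intro r s t
      rw [Function.iterate_succ_apply, Dmono D hDa hDx hDy hDw r s t,
        iterD_add, iterD_add, iterD_nsmul, iterD_nsmul, map_add, map_add,
        map_nsmul, map_nsmul, ih (r+1) (s+1) t, ih r (s+1) (t+1), ih r (s+2) (t+1)]
      have g1 : S n (((s+1:ℕ):ℚ) - 1) (Polynomial.X + Polynomial.C (((r+1:ℕ):ℚ) + (t:ℚ) + (n:ℚ)))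
          = S n (((s:ℚ)-1) + 1) (Polynomial.X + Polynomial.C ((r:ℚ) + (t:ℚ) + ((n+1:ℕ):ℚ))) :=
        S_congr n (by push_cast; ring) (by push_cast; ring)
      have g2 : S n (((s+1:ℕ):ℚ) - 1) (Polynomial.X + Polynomial.C ((r:ℚ) + ((t+1:ℕ):ℚ) + (n:ℚ)))
          = S n (((s:ℚ)-1) + 1) (Polynomial.X + Polynomial.C ((r:ℚ) + (t:ℚ) + ((n+1:ℕ):ℚ))) :=
        S_congr n (by push_cast; ring) (by push_cast; ring)
      have g3 : S n (((s+2:ℕ):ℚ) - 1) (Polynomial.X + Polynomial.C ((r:ℚ) + ((t+1:ℕ):ℚ) + (n:ℚ)))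
          = S n (((s:ℚ)-1) + 2) (Polynomial.X + Polynomial.C ((r:ℚ) + (t:ℚ) + ((n+1:ℕ):ℚ))) :=
        S_congr n (by push_cast; ring) (by push_cast; ring)
      rw [g1, g2, g3, S_rec n ((s:ℚ)-1) (Polynomial.X + Polynomial.C ((r:ℚ) + (t:ℚ) + ((n+1:ℕ):ℚ)))]
      rw [show (s:ℚ)-1+1 = (s:ℚ) by ring, show (s:ℚ)-1+2 = (s:ℚ)+1 by ring]
      simp only [nsmul_eq_mul]
      push_cast [Polynomial.C_eq_natCast, Polynomial.C_mul, Polynomial.C_add, Polynomial.C_neg, Polynomial.C_1, Polynomial.C_0, Nat.choose_one_right]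
      ring

end main

open MvPolynomial in
theorem phi_dn_axr (D : Derivation ℚ (MvPolynomial (Fin 4) ℚ) (MvPolynomial (Fin 4) ℚ))
    (hDa : D (X 0) = X 0 * X 1 * X 2)
    (hDx : D (X 1) = X 1 * X 2 * X 3)
    (hDy : D (X 2) = (X 2) ^ 3 * X 3)
    (hDw : D (X 3) = X 2 * (X 3) ^ 2)
    (φ : MvPolynomial (Fin 4) ℚ →ₐ[ℚ] Polynomial ℚ)
    (hφa : φ (X 0) = 1) (hφx : φ (X 1) = Polynomial.X)
    (hφy : φ (X 2) = 1) (hφw : φ (X 3) = 1)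
    (n r : ℕ) (hn : 1 ≤ n) :
    φ ((⇑D)^[n] (X 0 * (X 1) ^ r))
      = Polynomial.X ^ r * (Polynomial.X + (r : Polynomial ℚ))
          * (Polynomial.X + (r : Polynomial ℚ) + (n : Polynomial ℚ)) ^ (n - 1) := by
  obtain ⟨m, rfl⟩ : ∃ m, n = m + 1 := ⟨n - 1, by omega⟩
  have h := main_lemma D hDa hDx hDy hDw φ hφa hφx hφy hφw (m+1) r 0 0
  rw [pow_zero, pow_zero, mul_one, mul_one] at h
  have ha : ((0:ℕ):ℚ) - 1 = (-1 : ℚ) := by norm_num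
  have hu : Polynomial.X + Polynomial.C ((r:ℚ) + ((0:ℕ):ℚ) + ((m+1:ℕ):ℚ))
      = Polynomial.X + (r : Polynomial ℚ) + ((m+1 : ℕ) : Polynomial ℚ) := by
    push_cast [Polynomial.C_eq_natCast, Polynomial.C_mul, Polynomial.C_add, Polynomial.C_neg, Polynomial.C_1, Polynomial.C_0, Nat.choose_one_right]
    ring
  rw [S_congr (m+1) ha hu, S_neg_one] at h
  rw [h, show m + 1 - 1 = m by omega]
  have hC : Polynomial.C ((m:ℚ)+1) = ((m+1 : ℕ) : Polynomial ℚ) := by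
    push_cast [Polynomial.C_eq_natCast, Polynomial.C_mul, Polynomial.C_add, Polynomial.C_neg, Polynomial.C_1, Polynomial.C_0, Nat.choose_one_right]
    ring
  rw [hC]
  push_cast
  ring
end

section
/- (Lemma on grammar evaluations) For every integer n ≥ 2, φ(D^{n}(a·y^{−1})) = X·(X+1)·(X+n)^{n−2} − (X+n)^{n−1}, and for every integer n ≥ 3, φ(D^{n}(a·y^{−2})) = (X³ − 3nX − 2n)·(X+n)^{n−3}, as identities in ℚ[X]. -/
/-- rising factorial as integer: `rr m k = m(m+1)...(m+k-1)` -/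
def rr : ℤ → ℕ → ℤ
  | _, 0 => 1
  | m, (k+1) => rr m k * (m + k)

lemma rr_prepend (m : ℤ) (k : ℕ) : rr m (k+1) = m * rr (m+1) k := by
  induction k with
  | zero => simp [rr]
  | succ k ih =>
      show rr m (k+1) * (m + (k+1)) = m * (rr (m+1) k * (m+1+k))
      rw [ih]; ring

lemma rr_zero_succ (k : ℕ) : rr 0 (k+1) = 0 := by
  induction k with
  | zero => simp [rr]
  | succ k ih => show rr 0 (k+1) * _ = 0; rw [ih]; ring

lemma rr_negone_one : rr (-1) 1 = -1 := by simp [rr]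

lemma rr_negone_succ (k : ℕ) : rr (-1) (k+2) = 0 := by
  induction k with
  | zero => show rr (-1) 1 * ((-1) + 1) = 0; ring
  | succ k ih => show rr (-1) (k+2) * _ = 0; rw [ih]; ring

lemma key_coeff (n : ℕ) (e : ℤ) (k : ℕ) :
    (((n+1).choose (k+1) : ℤ)) * rr (e-1) (k+1)
      = (n.choose (k+1) : ℤ) * rr e (k+1)
        + (e * ((n.choose k : ℤ) * rr (e+1) k) - ((n:ℤ)+1) * ((n.choose k : ℤ) * rr e k)) := by
  have h1 : rr (e-1) (k+1) = (e-1) * rr e k := by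
    have := rr_prepend (e-1) k; rw [this]; ring_nf
  have h2 : rr e (k+1) = rr e k * (e + k) := rfl
  have h3 : e * rr (e+1) k = rr e (k+1) := (rr_prepend e k).symm
  have hp : (((n+1).choose (k+1) : ℤ)) = (n.choose k : ℤ) + (n.choose (k+1) : ℤ) := by
    exact_mod_cast Nat.choose_succ_succ n k
  have hb : (((n+1).choose (k+1) : ℤ)) * ((k:ℤ)+1) = ((n:ℤ)+1) * (n.choose k : ℤ) := by
    have h := Nat.add_one_mul_choose_eq n k
    have h' : ((n.succ * n.choose k : ℕ) : ℤ) = ((n.succ.choose k.succ * k.succ : ℕ) : ℤ) := by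
      rw [h]
    simp only [Nat.succ_eq_add_one] at h'
    push_cast at h'
    linear_combination -h'
  have h4 : e * rr (e+1) k = rr e k * (e + k) := h3.trans h2
  rw [h1]
  linear_combination (n.choose (k+1) : ℤ) * h3 + (-((n.choose (k+1) : ℤ) + (n.choose k : ℤ))) * h4 + rr e k * (e + (k:ℤ)) * hp - rr e k * hb

open Polynomial Finset

noncomputable def Qp (n lam e : ℕ) : Polynomial ℚ :=
  ∑ k ∈ Finset.range (n+1),
    Polynomial.C ((n.choose k : ℚ) * ((rr ((e:ℤ)-1) k : ℤ) : ℚ))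
      * (Polynomial.X + (((lam + n : ℕ) : ℚ[X]))) ^ (n - k)

-- recursion lemma skeleton
lemma Qrec (n lam e : ℕ) :
    Qp (n+1) lam e
      = (Polynomial.X + Polynomial.C ((lam : ℚ))) * Qp n (lam+1) (e+1)
        + Polynomial.C ((e : ℚ)) * Qp n (lam+1) (e+2) := by
  have harg1 : ((e+1 : ℕ) : ℤ) - 1 = (e : ℤ) := by push_cast; ring
  have harg2 : ((e+2 : ℕ) : ℤ) - 1 = (e : ℤ) + 1 := by push_cast; ring
  have hbase : (lam + 1 + n : ℕ) = (lam + (n+1) : ℕ) := by omega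
  set Y : ℚ[X] := Polynomial.X + (((lam + (n+1) : ℕ) : ℚ[X])) with hY
  have hXC : Polynomial.X + Polynomial.C ((lam : ℚ)) = Y - Polynomial.C ((n : ℚ) + 1) := by
    rw [hY]; simp only [Polynomial.C_eq_natCast, Polynomial.C_add, Polynomial.C_1]; push_cast; ring
  rw [Qp, Qp, Qp, harg1, harg2, hbase, hXC]
  have e1 : (Y - Polynomial.C ((n:ℚ)+1))
        * (∑ k ∈ range (n+1), Polynomial.C ((n.choose k : ℚ) * ((rr (e:ℤ) k : ℤ) : ℚ)) * Y ^ (n-k))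
      = (∑ k ∈ range (n+1), Polynomial.C ((n.choose k : ℚ) * ((rr (e:ℤ) k : ℤ) : ℚ)) * Y ^ (n+1-k))
        - ∑ k ∈ range (n+1),
            Polynomial.C (((n:ℚ)+1) * ((n.choose k : ℚ) * ((rr (e:ℤ) k : ℤ) : ℚ))) * Y ^ (n-k) := by
    rw [sub_mul, Finset.mul_sum, Finset.mul_sum]
    congr 1
    · apply Finset.sum_congr rfl; intro k hk
      have hk' : k ≤ n := Nat.lt_succ_iff.mp (Finset.mem_range.mp hk)
      have h5 : n + 1 - k = (n - k) + 1 := by omega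
      rw [h5, pow_succ]; ring
    · apply Finset.sum_congr rfl; intro k hk
      simp only [Polynomial.C_mul, Polynomial.C_add, Polynomial.C_1]; ring
  rw [e1]
  have e3 : (∑ k ∈ range (n+1),
        Polynomial.C ((n.choose k : ℚ) * ((rr (e:ℤ) k : ℤ) : ℚ)) * Y ^ (n+1-k))
      = ∑ k ∈ range (n+1),
        Polynomial.C ((n.choose (k+1) : ℚ) * ((rr (e:ℤ) (k+1) : ℤ) : ℚ)) * Y ^ (n-k)
        + Polynomial.C 1 * Y ^ (n+1) := by
    rw [Finset.sum_range_succ']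
    congr 1
    · rw [Finset.sum_range_succ]
      simp [Nat.choose_succ_self, Nat.add_sub_add_right]
    · simp [rr]
  rw [e3, Finset.mul_sum]
  rw [Finset.sum_range_succ']
  simp only [Nat.add_sub_add_right, Nat.sub_zero]
  have hmain : (∑ k ∈ range (n+1),
        Polynomial.C (((n+1).choose (k+1) : ℚ) * ((rr ((e:ℤ)-1) (k+1) : ℤ) : ℚ))
          * Y ^ (n-k))
      = (∑ k ∈ range (n+1),
          Polynomial.C ((n.choose (k+1) : ℚ) * ((rr (e:ℤ) (k+1) : ℤ) : ℚ)) * Y ^ (n-k))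
        - (∑ k ∈ range (n+1),
          Polynomial.C (((n:ℚ)+1) * ((n.choose k : ℚ) * ((rr (e:ℤ) k : ℤ) : ℚ))) * Y ^ (n-k))
        + ∑ k ∈ range (n+1),
          Polynomial.C ((e:ℚ)) * (Polynomial.C ((n.choose k : ℚ) * ((rr ((e:ℤ)+1) k : ℤ) : ℚ)) * Y ^ (n-k)) := by
    rw [← Finset.sum_sub_distrib, ← Finset.sum_add_distrib]
    apply Finset.sum_congr rfl
    intro k hk
    have hkeyq : (((n+1).choose (k+1) : ℚ)) * ((rr ((e:ℤ)-1) (k+1) : ℤ) : ℚ)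
        = (n.choose (k+1) : ℚ) * ((rr (e:ℤ) (k+1) : ℤ) : ℚ)
          + ((e:ℚ) * ((n.choose k : ℚ) * ((rr ((e:ℤ)+1) k : ℤ) : ℚ))
            - ((n:ℚ)+1) * ((n.choose k : ℚ) * ((rr (e:ℤ) k : ℤ) : ℚ))) := by
      exact_mod_cast congrArg (fun z : ℤ => (z : ℚ)) (key_coeff n (e : ℤ) k)
    rw [hkeyq]
    simp only [Polynomial.C_add, Polynomial.C_sub, Polynomial.C_mul]
    ring
  rw [hmain]
  have h0 : Polynomial.C (((n+1).choose 0 : ℚ) * ((rr ((e:ℤ)-1) 0 : ℤ) : ℚ)) = (Polynomial.C 1 : ℚ[X]) := by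
    simp [rr]
  rw [h0]
  ring

lemma rr_zero_k (k : ℕ) (hk : k ≠ 0) : rr 0 k = 0 := by
  obtain ⟨k', rfl⟩ := Nat.exists_eq_succ_of_ne_zero hk
  exact rr_zero_succ k'

lemma Qp_e1 (n lam : ℕ) : Qp n lam 1 = (Polynomial.X + (((lam + n : ℕ) : ℚ[X]))) ^ n := by
  rw [Qp]
  rw [Finset.sum_eq_single 0]
  · norm_num [rr]
  · intro k hk hk0
    have : rr (((1:ℕ):ℤ) - 1) k = 0 := by
      norm_num
      exact rr_zero_k k hk0
    rw [this]
    simp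
  · intro h; simp at h

lemma Qp_e0 (n lam : ℕ) :
    Qp (n+1) lam 0
      = (Polynomial.X + (((lam + (n+1) : ℕ) : ℚ[X]))) ^ (n+1)
        - Polynomial.C ((n:ℚ)+1) * (Polynomial.X + (((lam + (n+1) : ℕ) : ℚ[X]))) ^ n := by
  rw [Qp, Finset.sum_range_succ', Finset.sum_range_succ']
  have hz : ∀ k : ℕ, rr (((0:ℕ):ℤ) - 1) (k+1+1) = 0 := by
    intro k
    have : ((0:ℕ):ℤ) - 1 = -1 := by norm_num
    rw [this]
    exact rr_negone_succ k
  have : (∑ k ∈ range n,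
      Polynomial.C (((n+1).choose (k+1+1) : ℚ) * ((rr (((0:ℕ):ℤ)-1) (k+1+1) : ℤ) : ℚ))
        * (Polynomial.X + (((lam + (n+1) : ℕ) : ℚ[X]))) ^ (n+1 - (k+1+1))) = 0 := by
    apply Finset.sum_eq_zero
    intro k hk
    rw [hz k]
    simp
  rw [this]
  have h1 : rr (((0:ℕ):ℤ) - 1) (0+1) = -1 := by norm_num; rfl
  rw [h1]
  norm_num [rr]
  ring

/-- The localization of `ℚ[a,x,y,w]` away from `y`. -/
abbrev RLocY := Localization.Away (MvPolynomial.X 2 : MvPolynomial (Fin 4) ℚ)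

/-- The images of the four variables `a, x, y, w` in the localization away from `y`. -/
noncomputable def lv (i : Fin 4) : RLocY :=
  algebraMap (MvPolynomial (Fin 4) ℚ) RLocY (MvPolynomial.X i)

/-- monomial `a x^j y^e w^k` -/
noncomputable def Mm (j e k : ℕ) : RLocY := lv 0 * lv 1 ^ j * lv 2 ^ e * lv 3 ^ k

lemma qsmul_def (q : ℚ) (z : RLocY) : q • z = algebraMap ℚ RLocY q * z :=
  Algebra.smul_def q z

lemma D_pow (D : Derivation ℚ RLocY RLocY) (z u : RLocY) (hz : D z = z * u) (j : ℕ) :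
    D (z ^ j) = (j : ℚ) • (z ^ j * u) := by
  induction j with
  | zero =>
      rw [pow_zero, Nat.cast_zero, Derivation.map_one_eq_zero, qsmul_def, map_zero, zero_mul]
  | succ j ih =>
      rw [pow_succ, Derivation.leibniz, hz, ih]
      simp only [smul_eq_mul, qsmul_def, Nat.cast_add, Nat.cast_one, map_add, map_one]
      ring

lemma DM (D : Derivation ℚ RLocY RLocY)
    (hDa : D (lv 0) = lv 0 * lv 1 * lv 2)
    (hDx : D (lv 1) = lv 1 * lv 2 * lv 3)
    (hDy : D (lv 2) = (lv 2) ^ 3 * lv 3)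
    (hDw : D (lv 3) = lv 2 * (lv 3) ^ 2)
    (j e k : ℕ) :
    D (Mm j e k)
      = Mm (j+1) (e+1) k + ((j:ℚ)+(k:ℚ)) • Mm j (e+1) (k+1) + (e:ℚ) • Mm j (e+2) (k+1) := by
  have h1 : D (lv 1 ^ j) = (j:ℚ) • (lv 1 ^ j * (lv 2 * lv 3)) :=
    D_pow D _ _ (by rw [hDx]; ring) j
  have h2 : D (lv 2 ^ e) = (e:ℚ) • (lv 2 ^ e * (lv 2 ^ 2 * lv 3)) :=
    D_pow D _ _ (by rw [hDy]; ring) e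
  have h3 : D (lv 3 ^ k) = (k:ℚ) • (lv 3 ^ k * (lv 2 * lv 3)) :=
    D_pow D _ _ (by rw [hDw]; ring) k
  simp only [Mm]
  rw [Derivation.leibniz, Derivation.leibniz, Derivation.leibniz, h1, h2, h3, hDa]
  simp only [smul_eq_mul, qsmul_def, Nat.cast_add, map_add]
  ring

lemma iter_add (D : Derivation ℚ RLocY RLocY) (n : ℕ) :
    ∀ z w : RLocY, (⇑D)^[n] (z + w) = (⇑D)^[n] z + (⇑D)^[n] w := by
  induction n with
  | zero => intro z w; rfl
  | succ n ih =>
      intro z w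
      rw [Function.iterate_succ_apply, Function.iterate_succ_apply, Function.iterate_succ_apply,
        map_add]
      exact ih _ _

lemma iter_smul (D : Derivation ℚ RLocY RLocY) (n : ℕ) :
    ∀ (q : ℚ) (z : RLocY), (⇑D)^[n] (q • z) = q • (⇑D)^[n] z := by
  induction n with
  | zero => intro q z; rfl
  | succ n ih =>
      intro q z
      rw [Function.iterate_succ_apply, Function.iterate_succ_apply, qsmul_def]
      have hD : D (algebraMap ℚ RLocY q * z) = algebraMap ℚ RLocY q * D z := by
        rw [Derivation.leibniz, Derivation.map_algebraMap, smul_eq_mul, smul_eq_mul, mul_zero,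
          add_zero]
      rw [hD, ← qsmul_def, ih, qsmul_def]

lemma iter_sub (D : Derivation ℚ RLocY RLocY) (n : ℕ) (z w : RLocY) :
    (⇑D)^[n] (z - w) = (⇑D)^[n] z - (⇑D)^[n] w := by
  induction n generalizing z w with
  | zero => rfl
  | succ n ih =>
      rw [Function.iterate_succ_apply, Function.iterate_succ_apply, Function.iterate_succ_apply,
        map_sub]
      exact ih _ _

lemma main_iter (D : Derivation ℚ RLocY RLocY)
    (hDa : D (lv 0) = lv 0 * lv 1 * lv 2)
    (hDx : D (lv 1) = lv 1 * lv 2 * lv 3)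
    (hDy : D (lv 2) = (lv 2) ^ 3 * lv 3)
    (hDw : D (lv 3) = lv 2 * (lv 3) ^ 2)
    (φ : RLocY →ₐ[ℚ] Polynomial ℚ)
    (hφa : φ (lv 0) = 1) (hφx : φ (lv 1) = Polynomial.X)
    (hφy : φ (lv 2) = 1) (hφw : φ (lv 3) = 1)
    (n : ℕ) :
    ∀ j e k : ℕ, φ ((⇑D)^[n] (Mm j e k)) = Polynomial.X ^ j * Qp n (j+k) e := by
  induction n with
  | zero =>
      intro j e k
      rw [Function.iterate_zero_apply, Qp]
      simp [Mm, map_mul, map_pow, hφa, hφx, hφy, hφw, rr]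
  | succ n ih =>
      intro j e k
      rw [Function.iterate_succ_apply, DM D hDa hDx hDy hDw j e k,
        iter_add, iter_add, iter_smul, iter_smul, map_add, map_add, map_smul, map_smul,
        ih, ih, ih]
      have h6 : j+1+k = j+k+1 := by omega
      have h7 : j+(k+1) = j+k+1 := by omega
      rw [h6, h7, Qrec n (j+k) e]
      rw [Polynomial.smul_eq_C_mul, Polynomial.smul_eq_C_mul]
      push_cast
      ring

set_option maxHeartbeats 1000000 in
theorem phi_dn_a_yinv (D : Derivation ℚ RLocY RLocY)
    (hDa : D (lv 0) = lv 0 * lv 1 * lv 2)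
    (hDx : D (lv 1) = lv 1 * lv 2 * lv 3)
    (hDy : D (lv 2) = (lv 2) ^ 3 * lv 3)
    (hDw : D (lv 3) = lv 2 * (lv 3) ^ 2)
    (yinv : RLocY) (hyinv : lv 2 * yinv = 1)
    (φ : RLocY →ₐ[ℚ] Polynomial ℚ)
    (hφa : φ (lv 0) = 1) (hφx : φ (lv 1) = Polynomial.X)
    (hφy : φ (lv 2) = 1) (hφw : φ (lv 3) = 1) :
    (∀ n : ℕ, 2 ≤ n →
      φ ((⇑D)^[n] (lv 0 * yinv))
        = Polynomial.X * (Polynomial.X + 1)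
            * (Polynomial.X + (n : Polynomial ℚ)) ^ (n - 2)
          - (Polynomial.X + (n : Polynomial ℚ)) ^ (n - 1)) ∧
    (∀ n : ℕ, 3 ≤ n →
      φ ((⇑D)^[n] (lv 0 * yinv ^ 2))
        = (Polynomial.X ^ 3 - (3 * n : Polynomial ℚ) * Polynomial.X - (2 * n : Polynomial ℚ))
            * (Polynomial.X + (n : Polynomial ℚ)) ^ (n - 3)) := by
  have hmain := main_iter D hDa hDx hDy hDw φ hφa hφx hφy hφw
  -- derivative of yinv
  have hDyi : D yinv = -(lv 2 * lv 3) := by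
    have h1 : D (lv 2 * yinv) = 0 := by rw [hyinv]; exact Derivation.map_one_eq_zero D
    rw [Derivation.leibniz, hDy, smul_eq_mul, smul_eq_mul] at h1
    have h2 : D yinv = yinv * (lv 2 * D yinv) := by
      rw [← mul_assoc, mul_comm yinv (lv 2), hyinv, one_mul]
    have h3 : lv 2 * D yinv = -(yinv * (lv 2 ^ 3 * lv 3)) := by linear_combination h1
    rw [h3] at h2
    rw [h2]
    linear_combination (-(lv 2 * lv 3 * (yinv * lv 2 + 1))) * hyinv
  have hseed1 : D (lv 0 * yinv) = Mm 1 0 0 - Mm 0 1 1 := by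
    rw [Derivation.leibniz, hDyi, hDa, smul_eq_mul, smul_eq_mul]
    simp only [Mm]
    linear_combination (lv 0 * lv 1) * hyinv
  constructor
  · -- first part
    intro n hn
    obtain ⟨m, rfl⟩ : ∃ m, n = m + 2 := ⟨n - 2, by omega⟩
    rw [show m + 2 = (m+1)+1 from rfl, Function.iterate_succ_apply, hseed1,
      iter_sub, map_sub, hmain, hmain, Qp_e0 m 1, Qp_e1 (m+1) 1]
    have he1 : m + 1 + 1 - 2 = m := by omega
    have he2 : m + 1 + 1 - 1 = m + 1 := by omega
    rw [he1, he2]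
    simp only [pow_one, pow_zero, one_mul, Polynomial.C_add, Polynomial.C_1,
      Polynomial.C_eq_natCast]
    push_cast
    ring
  · -- second part
    intro n hn
    obtain ⟨m, rfl⟩ : ∃ m, n = m + 3 := ⟨n - 3, by omega⟩
    have hseed2 : D (lv 0 * yinv ^ 2) = lv 0 * lv 1 * yinv + (-2 : ℚ) • (lv 0 * lv 3) := by
      have hy2 : D (yinv ^ 2) = (2:ℚ) • (yinv * -(lv 2 * lv 3)) := by
        rw [sq, Derivation.leibniz, hDyi, smul_eq_mul, qsmul_def, map_ofNat]
        ring
      rw [Derivation.leibniz, hy2, hDa, smul_eq_mul, smul_eq_mul, qsmul_def, qsmul_def]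
      simp only [map_neg, map_ofNat]
      linear_combination (lv 0 * lv 1 * yinv - 2 * (lv 0 * lv 3)) * hyinv
    have hseed2b : D (lv 0 * lv 1 * yinv) = Mm 2 0 0 + Mm 1 0 1 - Mm 1 1 1 := by
      rw [Derivation.leibniz, Derivation.leibniz, hDyi, hDa, hDx, smul_eq_mul, smul_eq_mul,
        smul_eq_mul, smul_eq_mul]
      simp only [Mm]
      linear_combination (lv 0 * lv 1 * lv 3 + lv 0 * lv 1 ^ 2) * hyinv
    have hDaw : D (lv 0 * lv 3) = Mm 1 1 1 + Mm 0 1 2 := by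
      rw [Derivation.leibniz, hDa, hDw, smul_eq_mul, smul_eq_mul]
      simp only [Mm]
      ring
    have hDD : D (D (lv 0 * yinv ^ 2))
        = Mm 2 0 0 + Mm 1 0 1 + (-3 : ℚ) • Mm 1 1 1 + (-2 : ℚ) • Mm 0 1 2 := by
      rw [hseed2, map_add, Derivation.map_smul, hseed2b, hDaw]
      simp only [qsmul_def, map_neg, map_ofNat]
      ring
    rw [show m + 3 = (m+1)+1+1 from rfl, Function.iterate_succ_apply,
      Function.iterate_succ_apply, hDD]
    rw [iter_add, iter_add, iter_add, iter_smul, iter_smul]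
    rw [map_add, map_add, map_add, map_smul, map_smul]
    rw [hmain, hmain, hmain, hmain]
    rw [Qp_e0 m 2, Qp_e1 (m+1) 2]
    have he3 : m + 1 + 1 + 1 - 3 = m := by omega
    rw [he3]
    rw [Polynomial.smul_eq_C_mul, Polynomial.smul_eq_C_mul]
    simp only [pow_one, pow_zero, one_mul, Polynomial.C_add, Polynomial.C_1,
      Polynomial.C_eq_natCast, map_neg, map_ofNat]
    push_cast
    ring
end

section
/- (Abel's identity) For every integer n ≥ 1 and all real numbers x₁, x₂: (x₁+x₂+n)^{n} = (x₂+n)^{n} + ∑_{k=1}^{n} C(n,k) · x₁ · (x₁+k)^{k−1} · (x₂+n−k)^{n−k}, where C(n,k) denotes the binomial coefficient. -/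
/-!
With `T_n(x, y)` the sum over `k ≥ 1`, it suffices to show `T_n(x, y) = (x + y + n)^n - (y + n)^n`.
Both sides satisfy `∂_y F_{n+1}(y) = (n + 1) F_n(y + 1)`, so by induction on `n` they differ by a
constant in `y`. At `y = -x - n` the right side is `-(-x)^n`, and so is the left side:
`T_n(x, -x - n) + (-x)^n = x ∑_{k=0}^n (-1)^(n-k) C(n,k) (x + k)^(n-1)` is an `n`-th forward
difference of a polynomial of degree `n - 1`.
-/

open Finset

theorem alternating_sum_range_choose_mul_add_pow_eq_zero {R : Type*} [CommRing R] {j n : ℕ}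
    (h : j < n) (x : R) :
    ∑ k ∈ range (n + 1), (-1) ^ (n - k) * (n.choose k : R) * (x + k) ^ j = 0 := by
  have := fwdDiff_iter_eq_sum_shift (1 : R) (fun r ↦ r ^ j) n x
  rw [fwdDiff_iter_pow_eq_zero_of_lt h] at this
  simpa [zsmul_eq_mul] using this.symm

def abelTail {R : Type*} [CommRing R] (n : ℕ) (x y : R) : R :=
  ∑ k ∈ Icc 1 n, (n.choose k : R) * x * (x + k) ^ (k - 1) * (y + n - k) ^ (n - k)

theorem abelTail_neg_sub {R : Type*} [CommRing R] {n : ℕ} (hn : n ≠ 0) (x : R) :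
    abelTail n x (-x - n) = -(-x) ^ n := by
  have h := alternating_sum_range_choose_mul_add_pow_eq_zero (Nat.sub_one_lt hn) x
  rw [Nat.range_succ_eq_Icc_zero, ← add_sum_Ioc_eq_sum_Icc (Nat.zero_le n)] at h
  have hterm : ∀ k ∈ Ioc 0 n,
      (n.choose k : R) * x * (x + k) ^ (k - 1) * (-x - n + n - k) ^ (n - k)
        = x * ((-1) ^ (n - k) * n.choose k * (x + k) ^ (n - 1)) := by
    intro k hk
    obtain ⟨hk1, hkn⟩ := mem_Ioc.mp hk
    rw [show -x - n + n - k = -(x + k) by ring, neg_pow, show n - 1 = (k - 1) + (n - k) by omega]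
    ring
  have hzero : x * ((-1) ^ (n - 0) * (n.choose 0 : R) * (x + (0 : ℕ)) ^ (n - 1)) = (-x) ^ n := by
    obtain ⟨m, rfl⟩ := Nat.exists_eq_add_one_of_ne_zero hn
    simp only [Nat.sub_zero, Nat.choose_zero_right, Nat.cast_zero, Nat.cast_one, add_zero,
      Nat.add_sub_cancel]
    ring
  rw [abelTail, show Icc 1 n = Ioc 0 n from rfl, sum_congr rfl hterm, ← mul_sum]
  linear_combination x * h - hzero

theorem hasDerivAt_abelTail_succ (n : ℕ) (x y : ℝ) :
    HasDerivAt (abelTail (n + 1) x) ((n + 1) * abelTail n x (y + 1)) y := by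
  have hterm : ∀ k ∈ Icc 1 (n + 1), HasDerivAt
      (fun y ↦ ((n + 1).choose k : ℝ) * x * (x + k) ^ (k - 1) * (y + ↑(n + 1) - k) ^ (n + 1 - k))
      ((n + 1) * ((n.choose k : ℝ) * x * (x + k) ^ (k - 1) * (y + 1 + n - k) ^ (n - k))) y := by
    intro k _
    have hchoose : (n.choose k : ℝ) * (n + 1) = (n + 1).choose k * ↑(n + 1 - k) := by
      exact_mod_cast Nat.choose_mul_succ_eq n k
    refine ((((hasDerivAt_id' y).add_const _).sub_const (k : ℝ)).pow (n + 1 - k)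
      |>.const_mul (((n + 1).choose k : ℝ) * x * (x + k) ^ (k - 1))).congr_deriv ?_
    rw [show n + 1 - k - 1 = n - k by omega]
    push_cast
    linear_combination -(x * (x + k) ^ (k - 1) * (y + 1 + n - k) ^ (n - k)) * hchoose
  have hsum := HasDerivAt.fun_sum hterm
  rw [← mul_sum, sum_Icc_succ_top (by omega), Nat.choose_succ_self, Nat.cast_zero, zero_mul,
    zero_mul, zero_mul, add_zero] at hsum
  exact hsum

theorem abelTail_eq (n : ℕ) (x y : ℝ) : abelTail n x y = (x + y + n) ^ n - (y + n) ^ n := by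
  induction n generalizing y with
  | zero => simp [abelTail]
  | succ n ih =>
    have hderiv : ∀ z : ℝ, HasDerivAt (fun z ↦
        abelTail (n + 1) x z - ((x + z + ↑(n + 1)) ^ (n + 1) - (z + ↑(n + 1)) ^ (n + 1))) 0 z := by
      intro z
      have hL := (((hasDerivAt_id' z).const_add x).add_const (↑(n + 1) : ℝ)).pow (n + 1)
      have hR := ((hasDerivAt_id' z).add_const (↑(n + 1) : ℝ)).pow (n + 1)
      refine ((hasDerivAt_abelTail_succ n x z).sub (hL.sub hR)).congr_deriv ?_
      rw [ih, Nat.add_sub_cancel]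
      push_cast
      ring
    have hconst := is_const_of_deriv_eq_zero (fun z ↦ (hderiv z).differentiableAt)
      (fun z ↦ (hderiv z).deriv) y (-x - ↑(n + 1))
    rw [abelTail_neg_sub n.add_one_ne_zero, show x + (-x - ↑(n + 1)) + ↑(n + 1) = 0 by ring,
      zero_pow n.add_one_ne_zero] at hconst
    linear_combination hconst

theorem abel_identity_general (n : ℕ) (x₁ x₂ : ℝ) :
    (x₁ + x₂ + n) ^ n
      = (x₂ + n) ^ n
        + ∑ k ∈ Finset.Icc 1 n,
            (n.choose k : ℝ) * x₁ * (x₁ + k) ^ (k - 1) * (x₂ + n - k) ^ (n - k) := by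
  have h := abelTail_eq n x₁ x₂
  rw [abelTail] at h
  linear_combination -h

theorem abel_identity (n : ℕ) (hn : 1 ≤ n) (x₁ x₂ : ℝ) :
    (x₁ + x₂ + n) ^ n
      = (x₂ + n) ^ n
        + ∑ k ∈ Finset.Icc 1 n,
            (n.choose k : ℝ) * x₁ * (x₁ + k) ^ (k - 1) * (x₂ + n - k) ^ (n - k) :=
  abel_identity_general n x₁ x₂
end

section
/- (Abel-type identity, case (p,q) = (−1,−1)) For every integer n ≥ 1 and all real numbers x₁, x₂: (x₁+x₂)·(x₁+x₂+n)^{n−1} = x₂·(x₂+n)^{n−1} + x₁·(x₁+n)^{n−1} + ∑_{k=1}^{n−1} C(n,k) · x₁·x₂ · (x₁+k)^{k−1} · (x₂+n−k)^{n−k−1}, where C(n,k) denotes the binomial coefficient. -/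
/-!
Expanding `(y - k) ^ (n - k) = ((x + y) - (x + k)) ^ (n - k)` binomially and exchanging the
sums, the coefficient of `(x + y) ^ j` for `j < n` in Abel's sum
`∑_{k=1}^n C(n,k) x (x+k)^(k-1) (y-k)^(n-k)` is an alternating sum
`∑_k (-1)^(m-k) C(m,k) x (x+k)^(m-1)` with `m = n - j`: an `m`-th forward difference of a
polynomial of degree `m - 1`, hence equal to minus its missing `k = 0` term. These terms cancel
against the binomial expansion of `y ^ n = ((x + y) - x) ^ n`, which gives Abel's identity
`(x + y) ^ n = y ^ n + ∑_{k=1}^n C(n,k) x (x+k)^(k-1) (y-k)^(n-k)`.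

For the `(-1, -1)` case, put `y = x₂ + n` and write `x₂ = (y - k) - (n - k)` in each summand;
since `(n - k) C(n,k) = n C(n-1,k)`, the sum splits into Abel's sums for `n` and for `n - 1`.
-/

open Finset

theorem Nat.choose_mul_choose_sub_comm (n j k : ℕ) :
    n.choose k * (n - k).choose j = n.choose j * (n - j).choose k := by
  have hk := Nat.choose_mul (n := n) (k := k + j) (s := k) (by omega)
  have hj := Nat.choose_mul (n := n) (k := k + j) (s := j) (by omega)
  rw [Nat.add_sub_cancel_left] at hk
  rw [Nat.add_sub_cancel] at hj
  rw [← hk, ← hj, Nat.choose_symm_add]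

section

variable {R : Type*} [CommRing R]

theorem sum_range_alternating_choose_mul_pow_eq_zero {d m : ℕ} (h : d < m) (x : R) :
    ∑ k ∈ range (m + 1), (-1) ^ (m - k) * (m.choose k : R) * (x + k) ^ d = 0 := by
  have := fwdDiff_iter_eq_sum_shift 1 (fun r : R ↦ r ^ d) m x
  rw [fwdDiff_iter_pow_eq_zero_of_lt h] at this
  simpa [zsmul_eq_mul] using this.symm

theorem sum_Icc_alternating_choose_mul_mul_pow {m : ℕ} (hm : 0 < m) (x : R) :
    ∑ k ∈ Icc 1 m, (-1) ^ (m - k) * (m.choose k : R) * x * (x + k) ^ (m - 1) = -(-x) ^ m := by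
  obtain ⟨m, rfl⟩ : ∃ m', m = m' + 1 := ⟨m - 1, by omega⟩
  have h := sum_range_alternating_choose_mul_pow_eq_zero (Nat.lt_succ_self m) x
  rw [range_eq_Ico, sum_eq_sum_Ico_succ_bot (Nat.succ_pos _)] at h
  simp only [Nat.succ_eq_add_one, zero_add, Ico_add_one_right_eq_Icc, Nat.sub_zero,
    Nat.choose_zero_right, Nat.cast_zero, Nat.cast_one, add_zero, mul_one] at h
  calc ∑ k ∈ Icc 1 (m + 1),
        (-1) ^ (m + 1 - k) * ((m + 1).choose k : R) * x * (x + k) ^ (m + 1 - 1)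
      = x * ∑ k ∈ Icc 1 (m + 1), (-1) ^ (m + 1 - k) * ((m + 1).choose k : R) * (x + k) ^ m := by
        rw [mul_sum]
        exact Finset.sum_congr rfl fun k _ ↦ by rw [Nat.add_sub_cancel]; ring
    _ = -(-x) ^ (m + 1) := by
        rw [eq_neg_of_add_eq_zero_right h]
        ring

theorem abel_binomial_identity (n : ℕ) (x y : R) :
    (x + y) ^ n
      = y ^ n
        + ∑ k ∈ Icc 1 n, (n.choose k : R) * x * (x + k) ^ (k - 1) * (y - k) ^ (n - k) := by
  set F : ℕ → ℕ → R := fun j k ↦ (n.choose j : R) * (x + y) ^ j *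
    ((-1) ^ (n - j - k) * ((n - j).choose k : R) * x * (x + k) ^ (n - j - 1))
  have hexpand : ∀ k ∈ Icc 1 n, (n.choose k : R) * x * (x + k) ^ (k - 1) * (y - k) ^ (n - k)
      = ∑ j ∈ range (n - k + 1), F j k := by
    intro k hk
    obtain ⟨hk1, hkn⟩ := mem_Icc.mp hk
    rw [show y - (k : R) = (x + y) + -(x + k) by ring, add_pow (x + y), mul_sum]
    refine Finset.sum_congr rfl fun j hj ↦ ?_
    have hjk : j ≤ n - k := Nat.lt_succ_iff.mp (mem_range.mp hj)
    have hchoose := congrArg (Nat.cast : ℕ → R) (Nat.choose_mul_choose_sub_comm n j k)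
    push_cast at hchoose
    have hexp : n - j - 1 = (k - 1) + (n - j - k) := by omega
    simp only [F]
    rw [neg_pow, Nat.sub_right_comm n k j, hexp, pow_add]
    linear_combination (-1) ^ (n - j - k) * x * (x + k) ^ (k - 1) * (x + y) ^ j
      * (x + k) ^ (n - j - k) * hchoose
  have hcoeff : ∀ j ∈ range n,
      ∑ k ∈ Icc 1 (n - j), F j k = -(n.choose j * (x + y) ^ j * (-x) ^ (n - j)) := by
    intro j hj
    rw [← mul_sum, sum_Icc_alternating_choose_mul_mul_pow (by simpa using hj)]
    ring
  have hy : y ^ n = ∑ j ∈ range (n + 1), n.choose j * (x + y) ^ j * (-x) ^ (n - j) := by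
    rw [← add_neg_cancel_comm x y, add_pow]
    exact Finset.sum_congr rfl fun j _ ↦ by ring
  rw [Finset.sum_congr rfl hexpand, sum_comm' (t' := range n) (s' := fun j ↦ Icc 1 (n - j)),
    Finset.sum_congr rfl hcoeff, hy, sum_range_succ, sum_neg_distrib]
  · simp
  · intro k j
    simp only [mem_Icc, mem_range]
    omega

theorem choose_succ_mul_sub_mul_pow {m k : ℕ} (hk : k ≤ m) (w : R) :
    ((m + 1).choose k : R) * (w - (m + 1 - k)) * w ^ (m - k)
      = (m + 1).choose k * w ^ (m + 1 - k) - (m + 1) * m.choose k * w ^ (m - k) := by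
  have hchoose := congrArg (Nat.cast : ℕ → R) (Nat.choose_mul_succ_eq m k)
  push_cast [Nat.cast_sub (Nat.le_succ_of_le hk)] at hchoose
  rw [Nat.sub_add_comm hk, pow_succ]
  linear_combination w ^ (m - k) * hchoose

end

theorem abel_identity_m1_m1 (n : ℕ) (hn : 1 ≤ n) (x₁ x₂ : ℝ) :
    (x₁ + x₂) * (x₁ + x₂ + n) ^ (n - 1)
      = x₂ * (x₂ + n) ^ (n - 1) + x₁ * (x₁ + n) ^ (n - 1)
        + ∑ k ∈ Finset.Icc 1 (n - 1),
            (n.choose k : ℝ) * x₁ * x₂ * (x₁ + k) ^ (k - 1) * (x₂ + n - k) ^ (n - k - 1) := by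
  obtain ⟨m, rfl⟩ := Nat.exists_eq_add_of_le' hn
  have habel_succ := abel_binomial_identity (m + 1) x₁ (x₂ + (m + 1 : ℕ))
  have habel := abel_binomial_identity m x₁ (x₂ + (m + 1 : ℕ))
  rw [sum_Icc_succ_top (by omega)] at habel_succ
  simp only [Nat.choose_self, Nat.sub_self, pow_zero] at habel_succ
  have hsplit : ∀ k ∈ Icc 1 m,
      ((m + 1).choose k : ℝ) * x₁ * x₂ * (x₁ + k) ^ (k - 1)
          * (x₂ + (m + 1 : ℕ) - k) ^ (m + 1 - k - 1)
        = (m + 1).choose k * x₁ * (x₁ + k) ^ (k - 1) * (x₂ + (m + 1 : ℕ) - k) ^ (m + 1 - k)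
          - (m + 1) * (m.choose k * x₁ * (x₁ + k) ^ (k - 1)
              * (x₂ + (m + 1 : ℕ) - k) ^ (m - k)) := by
    intro k hk
    have h := choose_succ_mul_sub_mul_pow (mem_Icc.mp hk).2 (x₂ + (m + 1 : ℕ) - k)
    rw [Nat.sub_right_comm, Nat.add_sub_cancel]
    push_cast at h ⊢
    linear_combination x₁ * (x₁ + k) ^ (k - 1) * h
  rw [Nat.add_sub_cancel, Finset.sum_congr rfl hsplit, sum_sub_distrib, ← mul_sum]
  push_cast at habel_succ habel ⊢
  linear_combination habel_succ - (m + 1) * habel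
end

section
/- (Abel-type identity, case (p,q) = (−2,0)) For every integer n ≥ 2 and all real numbers x₁, x₂ with x₁ ≠ 0 and x₁ ≠ −1: ∑_{k=0}^{n} C(n,k) · x₁·(x₁+1) · (x₁+k)^{(k−2 : ℤ)} · (x₂+n−k)^{n−k} = x₁^{−1} · ( (x₁+1)·(x₁+x₂+n)^{n} − n·x₁·(x₁+x₂+n)^{n−1} ), where C(n,k) denotes the binomial coefficient and (x₁+k)^{(k−2 : ℤ)} denotes the integer power (zpow) of the real number x₁+k with exponent k−2 ∈ ℤ (which is negative only for k = 0 and k = 1, where the base x₁, respectively x₁+1, is nonzero by hypothesis). -/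
/-!
Write `A_n(x, y; p) = ∑ₖ C(n,k) (x+k)^(k+p) (y+n-k)^(n-k)` (`abelSum`).
Abel's identity `x · A_n(x, y; -1) = (x+y+n)^n` follows by expanding
`(y+n-k)^(n-k) = ((x+y+n) - (x+k))^(n-k)`: the coefficient of `(x+y+n)^(n-s)` is an `s`-th
finite difference of a polynomial of degree `s - 1`, so it vanishes unless `s = 0`.
Splitting `(x+k)^(k-1) = x (x+k)^(k-2) + k (x+k)^(k-2)` and using `k C(n,k) = n C(n-1,k-1)` gives
`A_n(x, y; -1) = x A_n(x, y; -2) + n A_{n-1}(x+1, y; -1)`, and Abel's identity at `x` and at `x + 1`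
evaluates both `A_n(x, y; -1)` and `A_{n-1}(x+1, y; -1)`.
-/

open Finset

theorem sum_neg_one_pow_mul_choose_mul_add_pow_eq_zero {R : Type*} [CommRing R] {j s : ℕ}
    (h : j < s) (x : R) :
    ∑ k ∈ range (s + 1), (-1) ^ (s - k) * (s.choose k : R) * (x + k) ^ j = 0 := by
  have := congr_fun (fwdDiff_iter_pow_eq_zero_of_lt (R := R) h) x
  rw [fwdDiff_iter_eq_sum_shift] at this
  simpa [zsmul_eq_mul, nsmul_eq_mul] using this

variable {K : Type*} [Field K]

lemma zpow_natCast_add_neg_one_mul_pow {w : K} {k : ℕ} (h : w ≠ 0 ∨ k ≠ 0) (j : ℕ) :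
    w ^ ((k : ℤ) + -1) * w ^ j = w ^ (((k + j : ℕ) : ℤ) + -1) := by
  rcases h with hw | hk
  · rw [← zpow_natCast w j, ← zpow_add₀ hw]
    push_cast; congr 1; ring
  · obtain ⟨i, rfl⟩ := Nat.exists_eq_succ_of_ne_zero hk
    have hi : ((i + 1 : ℕ) : ℤ) + -1 = (i : ℤ) := by push_cast; ring
    have hij : ((i + 1 + j : ℕ) : ℤ) + -1 = ((i + j : ℕ) : ℤ) := by push_cast; ring
    rw [hi, hij, zpow_natCast, zpow_natCast, pow_add]

def abelTerm (n : ℕ) (x y : K) (p : ℤ) (k : ℕ) : K :=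
  n.choose k * (x + k) ^ ((k : ℤ) + p) * (y + n - k) ^ (n - k)

/-- Riordan's Abel sum `A_n(x, y; p, 0)`. -/
def abelSum (n : ℕ) (x y : K) (p : ℤ) : K :=
  ∑ k ∈ range (n + 1), abelTerm n x y p k

theorem abelTerm_add_one (n : ℕ) (x y : K) {p : ℤ} {k : ℕ}
    (h : (k : ℤ) + p + 1 = 0 → x + k ≠ 0) :
    abelTerm n x y (p + 1) k = (x + k) * abelTerm n x y p k := by
  have hpow : (x + k) ^ ((k : ℤ) + (p + 1)) = (x + k) ^ ((k : ℤ) + p) * (x + k) := by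
    rw [← add_assoc, zpow_add' ?_, zpow_one]
    by_cases hk : (k : ℤ) + p + 1 = 0
    · exact Or.inl (h hk)
    · exact Or.inr (Or.inl hk)
  rw [abelTerm, abelTerm, hpow]
  ring

theorem sum_mul_abelTerm (n : ℕ) (x y : K) (p : ℤ) :
    ∑ k ∈ range (n + 1), (k : K) * abelTerm n x y p k =
      n * abelSum (n - 1) (x + 1) y (p + 1) := by
  cases n with
  | zero => simp
  | succ m =>
    rw [sum_range_succ', abelSum, mul_sum, Nat.cast_zero, zero_mul, add_zero]
    refine sum_congr rfl fun j _ => ?_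
    have hchoose :
        ((j + 1 : ℕ) : K) * (m + 1).choose (j + 1) = ((m + 1 : ℕ) : K) * m.choose j := by
      rw [← Nat.cast_mul, ← Nat.cast_mul, Nat.add_one_mul_choose_eq, mul_comm]
    simp only [abelTerm, Nat.add_sub_cancel, Nat.add_sub_add_right]
    rw [← mul_assoc, ← mul_assoc, hchoose]
    push_cast
    rw [show (j : ℤ) + 1 + p = j + (p + 1) by ring, show x + ((j : K) + 1) = x + 1 + j by ring]
    ring

theorem abelSum_add_one (n : ℕ) (x y : K) {p : ℤ}
    (h : ∀ k : ℕ, (k : ℤ) + p + 1 = 0 → x + k ≠ 0) :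
    abelSum n x y (p + 1) = x * abelSum n x y p + n * abelSum (n - 1) (x + 1) y (p + 1) := by
  rw [← sum_mul_abelTerm, abelSum, abelSum, mul_sum, ← sum_add_distrib]
  refine sum_congr rfl fun k _ => ?_
  rw [abelTerm_add_one n x y (h k)]
  ring

theorem abel_identity_s17 (n : ℕ) {x : K} (hx : x ≠ 0) (y : K) :
    x * abelSum n x y (-1) = (x + y + n) ^ n := by
  set z := x + y + n
  have expand : ∀ k ∈ range (n + 1), x * abelTerm n x y (-1) k =
      ∑ j ∈ range (n + 1 - k), (n.choose k * (n - k).choose j : K) * z ^ (n - k - j) *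
        (x * ((x + k) ^ ((k : ℤ) + -1) * (-(x + k)) ^ j)) := by
    intro k hk
    rw [abelTerm, show y + n - k = -(x + k) + z by ring, add_pow,
      show n - k + 1 = n + 1 - k by have := mem_range.mp hk; omega, mul_sum, mul_sum]
    exact sum_congr rfl fun j _ => by ring
  have collect : ∀ s ∈ range (n + 1),
      ∑ k ∈ range (s + 1), (n.choose k * (n - k).choose (s - k) : K) * z ^ (n - k - (s - k)) *
          (x * ((x + k) ^ ((k : ℤ) + -1) * (-(x + k)) ^ (s - k))) =
        n.choose s * z ^ (n - s) *
          (x * ∑ k ∈ range (s + 1),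
            (-1) ^ (s - k) * (s.choose k : K) * (x + k) ^ ((s : ℤ) + -1)) := by
    intro s hs
    rw [mul_sum, mul_sum]
    refine sum_congr rfl fun k hk => ?_
    have hks : k ≤ s := Nat.lt_succ_iff.mp (mem_range.mp hk)
    have hchoose : (n.choose k * (n - k).choose (s - k) : K) = n.choose s * s.choose k := by
      rw [← Nat.cast_mul, ← Nat.cast_mul, Nat.choose_mul hks]
    have hpow : (x + k) ^ ((k : ℤ) + -1) * (x + k) ^ (s - k) = (x + k) ^ ((s : ℤ) + -1) := by
      rw [zpow_natCast_add_neg_one_mul_pow ?_, Nat.add_sub_cancel' hks]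
      rcases Nat.eq_zero_or_pos k with rfl | hk0
      · simpa using hx
      · exact Or.inr hk0.ne'
    rw [hchoose, neg_pow, show n - k - (s - k) = n - s by omega, ← hpow]
    ring
  rw [abelSum, mul_sum, sum_congr rfl expand, ← sum_range_diag_flip, sum_congr rfl collect,
    sum_range_succ', sum_eq_zero fun s _ => ?_]
  · simp [hx]
  · rw [show ((s + 1 : ℕ) : ℤ) + -1 = (s : ℤ) by push_cast; ring]
    simp only [zpow_natCast, sum_neg_one_pow_mul_choose_mul_add_pow_eq_zero s.lt_succ_self,
      mul_zero]

theorem abel_identity_m2_0_general (n : ℕ) (x₁ x₂ : ℝ)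
    (h0 : x₁ ≠ 0) (h1 : x₁ ≠ -1) :
    ∑ k ∈ Finset.range (n + 1),
        (n.choose k : ℝ) * (x₁ * (x₁ + 1)) * (x₁ + k) ^ ((k : ℤ) - 2) * (x₂ + n - k) ^ (n - k)
      = x₁⁻¹ * ((x₁ + 1) * (x₁ + x₂ + n) ^ n - n * x₁ * (x₁ + x₂ + n) ^ (n - 1)) := by
  have hx1 : x₁ + 1 ≠ 0 := fun h => h1 (eq_neg_of_add_eq_zero_left h)
  have hsum : ∑ k ∈ Finset.range (n + 1),
      (n.choose k : ℝ) * (x₁ * (x₁ + 1)) * (x₁ + k) ^ ((k : ℤ) - 2) * (x₂ + n - k) ^ (n - k) =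
        x₁ * (x₁ + 1) * abelSum n x₁ x₂ (-2) := by
    rw [abelSum, mul_sum]
    exact sum_congr rfl fun k _ => by rw [abelTerm, sub_eq_add_neg]; ring
  have hrec : abelSum n x₁ x₂ (-1) =
      x₁ * abelSum n x₁ x₂ (-2) + n * abelSum (n - 1) (x₁ + 1) x₂ (-1) := by
    rw [show (-1 : ℤ) = -2 + 1 by norm_num]
    exact abelSum_add_one n x₁ x₂ fun k hk => by
      obtain rfl : k = 1 := by omega
      simpa using hx1
  have hshift : (n : ℝ) * (x₁ + 1 + x₂ + (n - 1 : ℕ)) ^ (n - 1) =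
      n * (x₁ + x₂ + n) ^ (n - 1) := by
    rcases n with _ | m
    · simp
    · rw [Nat.add_sub_cancel]
      push_cast
      ring
  rw [hsum, eq_inv_mul_iff_mul_eq₀ h0]
  linear_combination (-x₁ * (x₁ + 1)) * hrec + (x₁ + 1) * abel_identity_s17 n h0 x₂ -
    n * x₁ * abel_identity_s17 (n - 1) hx1 x₂ - x₁ * hshift

theorem abel_identity_m2_0 (n : ℕ) (hn : 2 ≤ n) (x₁ x₂ : ℝ)
    (h0 : x₁ ≠ 0) (h1 : x₁ ≠ -1) :
    ∑ k ∈ Finset.range (n + 1),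
        (n.choose k : ℝ) * (x₁ * (x₁ + 1)) * (x₁ + k) ^ ((k : ℤ) - 2) * (x₂ + n - k) ^ (n - k)
      = x₁⁻¹ * ((x₁ + 1) * (x₁ + x₂ + n) ^ n - n * x₁ * (x₁ + x₂ + n) ^ (n - 1)) :=
  abel_identity_m2_0_general n x₁ x₂ h0 h1
end
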